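/- arXiv:2308.06852 — 6 statements merged into one kernel-verified Lean document; each statement's English description precedes it below -/
import Mathlib

section
/- Let (R,V) be a generalized root system with base S and suppose β', β'' ∈ R satisfy β' ≺_S β''. Then there exists a sequence of roots β' = β₀, β₁, …, β_k = β'' in R such that β_i − β_{i−1} ∈ S for every 1 ≤ i ≤ k. -/
open scoped RealInnerProductSpace

variable {V : Type*} [NormedAddCommGroup V] [InnerProductSpace ℝ V] [FiniteDimensional ℝ V]

/-- A generalized root system: `R` is a nonempty finite spanning set such that for
`α, β ∈ R`: `⟪α,β⟫ < 0` implies `α+β ∈ R`; `⟪α,β⟫ > 0` implies `α-β ∈ R`; and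
`⟪α,β⟫ = 0` implies `α+β ∈ R ↔ α-β ∈ R`. -/
def IsGRS (R : Set V) : Prop :=
  R.Nonempty ∧ R.Finite ∧ Submodule.span ℝ R = ⊤ ∧
    ∀ α ∈ R, ∀ β ∈ R,
      (⟪α, β⟫ < 0 → α + β ∈ R) ∧
      (0 < ⟪α, β⟫ → α - β ∈ R) ∧
      (⟪α, β⟫ = 0 → (α + β ∈ R ↔ α - β ∈ R))

/-- `v` is a linear combination of elements of `S` with nonnegative integer coefficients. -/
def IsNonnegIntComb (S : Set V) (v : V) : Prop :=
  ∃ c : V →₀ ℤ, ↑c.support ⊆ S ∧ (∀ α, 0 ≤ c α) ∧ v = c.sum fun α n => (n : ℝ) • α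

/-- A base of a GRS `R`: a subset of `R` which is a vector-space basis of `V` such that
every root is a linear combination of `S` with coefficients all nonnegative integers or
all nonpositive integers. -/
def IsBase (R S : Set V) : Prop :=
  S ⊆ R ∧ LinearIndependent ℝ ((↑) : S → V) ∧ Submodule.span ℝ S = ⊤ ∧
    ∀ β ∈ R, IsNonnegIntComb S β ∨ IsNonnegIntComb S (-β)

/-- `R⁺(S)`: the roots whose coefficients in `S` are all nonnegative integers. -/
def posRoots (R S : Set V) : Set V := {β ∈ R | IsNonnegIntComb S β}

/-- The partial order `≺_S`: `x ≺_S y` iff `y - x` is a nonnegative integer combination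
of `S`. -/
def prec (S : Set V) (x y : V) : Prop := IsNonnegIntComb S (y - x)

/-- `β` is indecomposable in `P`: `β ∈ P` and `β` is not the sum of two nonzero
elements of `P`. -/
def IsIndecomposableIn (P : Set V) (β : V) : Prop :=
  β ∈ P ∧ ¬∃ γ ∈ P, ∃ δ ∈ P, γ ≠ 0 ∧ δ ≠ 0 ∧ β = γ + δ

/-- A positive system of `R`. -/
def IsPositiveSystem (R P : Set V) : Prop :=
  P ⊆ R ∧ (∀ α ∈ P, ∀ β ∈ P, α + β ∈ R → α + β ∈ P) ∧ R = P ∪ -P ∧ P ∩ -P = {0}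

/-- Irreducibility of a GRS. -/
def IsIrreducibleGRS (R : Set V) : Prop :=
  ∀ R₁ R₂ : Set V, R = R₁ ∪ R₂ → (∀ α ∈ R₁, ∀ β ∈ R₂, ⟪α, β⟫ = 0) →
    R₁ ⊆ {0} ∨ R₂ ⊆ {0}

/-- A primitive root of `R`. -/
def IsPrimitive (R : Set V) (α : V) : Prop :=
  α ∈ R ∧ α ≠ 0 ∧ ∀ (k : ℤ) (α' : V), 0 < k → α' ∈ R → α = (k : ℝ) • α' → k = 1

/-- The orthogonal projection `π_I` of `V` onto the orthogonal complement of the span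
of `I`. -/
noncomputable def projAway (I : Set V) : V → ↥((Submodule.span ℝ I)ᗮ) :=
  fun v => Submodule.orthogonalProjection ((Submodule.span ℝ I)ᗮ) v

/-- A root system. -/
def IsRootSystem (Δ : Set V) : Prop :=
  Δ.Finite ∧ (0 : V) ∉ Δ ∧ Submodule.span ℝ Δ = ⊤ ∧
    ∀ α ∈ Δ, ∀ β ∈ Δ,
      (β - (2 * ⟪β, α⟫ / ⟪α, α⟫) • α ∈ Δ) ∧
      (∃ n : ℤ, 2 * ⟪β, α⟫ / ⟪α, α⟫ = (n : ℝ)) ∧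
      ∀ t : ℝ, t • α ∈ Δ → t = 1 ∨ t = -1

/-!
Write `β'' - β'` as a sum of simple roots and induct on the number of summands. Since
`⟪β'' - β', β'' - β'⟫ > 0`, some summand `α` has `⟪β'' - β', α⟫ > 0`, so either `⟪β', α⟫ < 0` or
`⟪β'', α⟫ > 0`. In the first case `β' + α` is a root, in the second `β'' - α` is; either way the
chain is extended by one step at one end, and the remaining difference has one summand fewer.
-/

open Relation

def SimpleStep {G : Type*} [Sub G] (R S : Set G) (x y : G) : Prop := y ∈ R ∧ y - x ∈ S

section

variable {E : Type*} [NormedAddCommGroup E] [InnerProductSpace ℝ E]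

theorem Multiset.exists_mem_inner_sum_pos {m : Multiset E} (hm : m.sum ≠ 0) :
    ∃ a ∈ m, 0 < ⟪m.sum, a⟫ := by
  by_contra! h
  have hsum : ⟪m.sum, m.sum⟫ = (m.map fun a => ⟪m.sum, a⟫).sum :=
    map_multiset_sum (innerₛₗ ℝ m.sum) m
  have hnonpos : ⟪m.sum, m.sum⟫ ≤ 0 := by
    rw [hsum]
    refine Multiset.sum_induction (· ≤ 0) _ (fun _ _ => add_nonpos) le_rfl ?_
    simpa using h
  exact hm (real_inner_self_nonpos.mp hnonpos)

theorem Relation.ReflTransGen.exists_seq {α : Type*} {r : α → α → Prop} {a b : α}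
    (h : ReflTransGen r a b) :
    ∃ (k : ℕ) (f : ℕ → α), f 0 = a ∧ f k = b ∧ ∀ i < k, r (f i) (f (i + 1)) := by
  induction h with
  | refl => exact ⟨0, fun _ => a, rfl, rfl, fun _ hi => absurd hi (Nat.not_lt_zero _)⟩
  | @tail c d _ hcd ih =>
    obtain ⟨k, f, hf0, hfk, hf⟩ := ih
    refine ⟨k + 1, fun i => if i ≤ k then f i else d, by simp [hf0], by simp, fun i hi => ?_⟩
    rcases Nat.lt_succ_iff_lt_or_eq.mp hi with hik | rfl
    · simpa [hik.le, Nat.succ_le_of_lt hik] using hf i hik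
    · simpa [hfk] using hcd

theorem IsNonnegIntComb.mem_closure {S : Set E} {v : E} (h : IsNonnegIntComb S v) :
    v ∈ AddSubmonoid.closure S := by
  obtain ⟨c, hsupp, hpos, rfl⟩ := h
  refine AddSubmonoid.sum_mem _ fun a ha => ?_
  have hcoef : ((c a : ℤ) : ℝ) • a = (c a).toNat • a := by
    rw [← Nat.cast_smul_eq_nsmul ℝ]
    congr 1
    exact_mod_cast (Int.toNat_of_nonneg (hpos a)).symm
  show ((c a : ℤ) : ℝ) • a ∈ _
  rw [hcoef]
  exact AddSubmonoid.nsmul_mem _ (AddSubmonoid.subset_closure (hsupp ha)) _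

variable {R S : Set E}

theorem IsGRS.add_mem_or_sub_mem (hR : IsGRS R) {α β' β'' : E} (hα : α ∈ R) (hβ' : β' ∈ R)
    (hβ'' : β'' ∈ R) (h : 0 < ⟪β'' - β', α⟫) : β' + α ∈ R ∨ β'' - α ∈ R := by
  rw [inner_sub_left] at h
  by_cases hneg : ⟪β', α⟫ < 0
  · exact .inl ((hR.2.2.2 β' hβ' α hα).1 hneg)
  · exact .inr ((hR.2.2.2 β'' hβ'' α hα).2.1 (by linarith))

theorem IsGRS.reflTransGen_simpleStep (hR : IsGRS R) (hSR : S ⊆ R) (m : Multiset E)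
    (hmS : ∀ a ∈ m, a ∈ S) {β' β'' : E} (hβ' : β' ∈ R) (hβ'' : β'' ∈ R) (hm : β'' - β' = m.sum) :
    ReflTransGen (SimpleStep R S) β' β'' := by
  classical
  induction m using Multiset.strongInductionOn generalizing β' β'' with
  | ih m ih =>
    by_cases hβ : β'' = β'
    · rw [hβ]
    obtain ⟨α, hαm, hα⟩ := Multiset.exists_mem_inner_sum_pos (hm ▸ sub_ne_zero.mpr hβ)
    have hαS : α ∈ S := hmS α hαm
    have hrest : β'' - β' - α = (m.erase α).sum := by
      rw [hm, ← Multiset.sum_erase hαm, add_sub_cancel_left]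
    have ih' {γ' γ'' : E} : γ' ∈ R → γ'' ∈ R → γ'' - γ' = (m.erase α).sum →
        ReflTransGen (SimpleStep R S) γ' γ'' :=
      ih (m.erase α) (Multiset.erase_lt.mpr hαm) fun a ha => hmS a (Multiset.mem_of_mem_erase ha)
    rcases hR.add_mem_or_sub_mem (hSR hαS) hβ' hβ'' (hm ▸ hα) with hup | hdown
    · refine .head ⟨hup, by simpa using hαS⟩ (ih' hup hβ'' ?_)
      rw [← hrest]; abel
    · refine .tail (ih' hβ' hdown ?_) ⟨hβ'', by simpa using hαS⟩
      rw [← hrest]; abel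

end

/-- If `β' ≺_S β''`, there is a chain of roots from `β'` to `β''` whose
consecutive differences are simple roots. -/
theorem stmt3 (R S : Set V) (hR : IsGRS R) (hS : IsBase R S)
    (β' β'' : V) (hβ' : β' ∈ R) (hβ'' : β'' ∈ R) (h : prec S β' β'') :
    ∃ (k : ℕ) (f : ℕ → V), f 0 = β' ∧ f k = β'' ∧ (∀ i ≤ k, f i ∈ R) ∧
      ∀ i, 1 ≤ i → i ≤ k → f i - f (i - 1) ∈ S := by
  obtain ⟨m, hmS, hm⟩ := AddSubmonoid.exists_multiset_of_mem_closure h.mem_closure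
  obtain ⟨k, f, hf0, hfk, hstep⟩ :=
    (hR.reflTransGen_simpleStep hS.1 m hmS hβ' hβ'' hm.symm).exists_seq
  have hstep' : ∀ i, 1 ≤ i → i ≤ k → SimpleStep R S (f (i - 1)) (f i) := fun i hi hik => by
    simpa [Nat.sub_add_cancel hi] using hstep (i - 1) (by omega)
  refine ⟨k, f, hf0, hfk, fun i hik => ?_, fun i hi hik => (hstep' i hi hik).2⟩
  rcases Nat.eq_zero_or_pos i with rfl | hi
  · exact hf0 ▸ hβ'
  · exact (hstep' i hi hik).1
end

section
/- Let (R,V) be a generalized root system with base S, and assume S = S' ⊔ S'' is a partition of S with ⟨α',α''⟩ = 0 for all α' ∈ S' and α'' ∈ S''. Then every root of R belongs to the linear span of S' or to the linear span of S''. -/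
open scoped RealInnerProductSpace

variable {V : Type*} [NormedAddCommGroup V] [InnerProductSpace ℝ V] [FiniteDimensional ℝ V]

/-! Write a positive root as `β = γ' + γ''` with `γ'` a sum of simple roots from `S'` and `γ''`
one from `S''`, and induct on the height of `β`. If `γ' ≠ 0`, then `⟪β, γ'⟫ = ‖γ'‖² > 0`, so a
simple root `α` occurring in `γ'` has `⟪β, α⟫ > 0` and `β - α` is a root of smaller height. By
induction it lies in `span S'`, and then so does `β`, or in `span S''`, which by orthogonality
forces `γ' = α`. Arguing likewise with `γ''` leaves only the case `β = α' + α''` with simple roots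
`α' ∈ S'`, `α'' ∈ S''`; as `⟪α', α''⟫ = 0`, also `α' - α''` is a root, but its coefficients have
both signs. Negative roots follow because `R = -R`. -/

section

variable {E : Type*} [NormedAddCommGroup E] [InnerProductSpace ℝ E]

namespace IsGRS

variable {R : Set E} {α β : E}

theorem sub_mem_of_inner_pos (hR : IsGRS R) (hα : α ∈ R) (hβ : β ∈ R) (h : 0 < ⟪α, β⟫) :
    α - β ∈ R :=
  (hR.2.2.2 α hα β hβ).2.1 h

theorem sub_mem_of_inner_eq_zero (hR : IsGRS R) (hα : α ∈ R) (hβ : β ∈ R) (h : ⟪α, β⟫ = 0)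
    (hadd : α + β ∈ R) : α - β ∈ R :=
  ((hR.2.2.2 α hα β hβ).2.2 h).mp hadd

theorem zero_mem (hR : IsGRS R) : (0 : E) ∈ R := by
  obtain ⟨γ, hγ⟩ := hR.1
  rcases real_inner_self_nonneg (x := γ) |>.lt_or_eq with hpos | hzero
  · simpa using hR.sub_mem_of_inner_pos hγ hγ hpos
  · rwa [← inner_self_eq_zero.mp hzero.symm]

theorem neg_mem (hR : IsGRS R) (hα : α ∈ R) : -α ∈ R := by
  simpa using hR.sub_mem_of_inner_eq_zero hR.zero_mem hα (inner_zero_left α) (by simpa using hα)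

end IsGRS

theorem IsNonnegIntComb.exists_multiset_sum_eq {S : Set E} {v : E} (hv : IsNonnegIntComb S v) :
    ∃ m : Multiset E, (∀ α ∈ m, α ∈ S) ∧ m.sum = v := by
  obtain ⟨c, hcS, hc, rfl⟩ := hv
  refine AddSubmonoid.exists_multiset_of_mem_closure (AddSubmonoid.sum_mem _ fun α hα => ?_)
  lift c α to ℕ using hc α with n
  rw [Int.cast_natCast, Nat.cast_smul_eq_nsmul]
  exact AddSubmonoid.nsmul_mem _ (AddSubmonoid.subset_closure (hcS hα)) n

theorem IsNonnegIntComb.coord_nonneg {ι : Type*} {b : Module.Basis ι ℝ E} {S : Set E}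
    (hS : S ⊆ Set.range b) {v : E} (hv : IsNonnegIntComb S v) (i : ι) : 0 ≤ b.coord i v := by
  obtain ⟨c, hcS, hc, rfl⟩ := hv
  rw [map_finsuppSum]
  refine Finset.sum_nonneg fun α hα => ?_
  obtain ⟨j, rfl⟩ := hS (hcS hα)
  simp only [map_smul, Module.Basis.coord_apply, Module.Basis.repr_self]
  exact smul_nonneg (Int.cast_nonneg_iff.mpr (hc _)) (Finsupp.single_nonneg.mpr zero_le_one i)

theorem Module.Basis.not_isNonnegIntComb_sub {ι : Type*} (b : Module.Basis ι ℝ E) {S : Set E}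
    (hS : S ⊆ Set.range b) {i j : ι} (hij : i ≠ j) : ¬IsNonnegIntComb S (b i - b j) := by
  intro h
  have hcoord : b.coord j (b i - b j) = -1 := by simp [Module.Basis.coord_apply, hij]
  linarith [h.coord_nonneg hS j]

theorem IsBase.sub_notMem {R S : Set E} (hS : IsBase R S) {α β : E} (hα : α ∈ S) (hβ : β ∈ S)
    (hne : α ≠ β) : α - β ∉ R := by
  obtain ⟨-, hli, hspan, hbase⟩ := hS
  let b := Module.Basis.mk hli (by simp [hspan])
  have hSb : S ⊆ Set.range b := by simp [b]
  intro h
  rcases hbase _ h with h | h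
  · exact b.not_isNonnegIntComb_sub hSb (i := ⟨α, hα⟩) (j := ⟨β, hβ⟩) (by simpa using hne)
      (by simpa [b] using h)
  · exact b.not_isNonnegIntComb_sub hSb (i := ⟨β, hβ⟩) (j := ⟨α, hα⟩) (by simpa using hne.symm)
      (by simpa [b] using h)

theorem Multiset.exists_mem_inner_pos_of_inner_sum_pos {v : E} (m : Multiset E)
    (h : 0 < ⟪v, m.sum⟫) : ∃ α ∈ m, 0 < ⟪v, α⟫ := by
  induction m using Multiset.induction_on with
  | empty => simp at h
  | cons a m ih =>
    rw [Multiset.sum_cons, inner_add_right] at h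
    by_cases ha : 0 < ⟪v, a⟫
    · exact ⟨a, Multiset.mem_cons_self a m, ha⟩
    · obtain ⟨α, hα, hpos⟩ := ih (by linarith)
      exact ⟨α, Multiset.mem_cons_of_mem hα, hpos⟩

/- The descent step: `m` sums to the part of `β` lying in `P`, and `ih` is the induction
hypothesis for the roots `β - α`, of smaller height. -/
open Submodule in
theorem IsGRS.mem_or_mem_or_sum_mem {R : Set E} (hR : IsGRS R) {P Q : Submodule ℝ E}
    (hPQ : P ⟂ Q) {β : E} (hβ : β ∈ R) {m : Multiset E} (hmR : ∀ α ∈ m, α ∈ R)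
    (hmP : ∀ α ∈ m, α ∈ P) (hQ : β - m.sum ∈ Q)
    (ih : ∀ α ∈ m, β - α ∈ R → β - α ∈ P ∨ β - α ∈ Q) :
    β ∈ P ∨ β ∈ Q ∨ m.sum ∈ m := by
  have hsumP : m.sum ∈ P := multiset_sum_mem _ hmP
  by_cases hzero : m.sum = 0
  · exact Or.inr (Or.inl (by simpa [hzero] using hQ))
  have hpos : 0 < ⟪β, m.sum⟫ := by
    calc 0 < ⟪m.sum, m.sum⟫ := real_inner_self_pos.mpr hzero
      _ = ⟪β, m.sum⟫ := by
        rw [← sub_add_cancel β m.sum, inner_add_left, hPQ.symm.inner_eq hQ hsumP, zero_add]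
  obtain ⟨α, hαm, hα⟩ := m.exists_mem_inner_pos_of_inner_sum_pos hpos
  rcases ih α hαm (hR.sub_mem_of_inner_pos hβ (hmR α hαm) hα) with h | h
  · exact Or.inl (by simpa using P.add_mem h (hmP α hαm))
  · have hsum_sub : m.sum - α = 0 :=
      disjoint_def.mp hPQ.disjoint _ (P.sub_mem hsumP (hmP α hαm))
        (by simpa using Q.sub_mem h hQ)
    rw [sub_eq_zero.mp hsum_sub]
    exact Or.inr (Or.inr hαm)

open Submodule in
theorem IsBase.multiset_sum_mem_span_or_mem_span {R S S' S'' : Set E} (hR : IsGRS R)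
    (hS : IsBase R S) (hunion : S = S' ∪ S'') (hdisj : Disjoint S' S'')
    (horth : span ℝ S' ⟂ span ℝ S'') (m : Multiset E) (hmS : ∀ α ∈ m, α ∈ S)
    (hm : m.sum ∈ R) : m.sum ∈ span ℝ S' ∨ m.sum ∈ span ℝ S'' := by
  classical
  induction m using Multiset.strongInductionOn with
  | ih m IH =>
  have ih : ∀ α ∈ m, m.sum - α ∈ R → m.sum - α ∈ span ℝ S' ∨ m.sum - α ∈ span ℝ S'' := by
    intro α hα hαR
    rw [← Multiset.sum_erase hα, add_sub_cancel_left] at hαR ⊢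
    exact IH _ (Multiset.erase_lt.mpr hα) (fun a ha => hmS a (Multiset.mem_of_mem_erase ha)) hαR
  set m' := m.filter (· ∈ S')
  set m'' := m.filter (· ∉ S')
  have hsplit : m' + m'' = m := Multiset.filter_add_not _ m
  have hm' : ∀ α ∈ m', α ∈ S' := fun α hα => (Multiset.mem_filter.mp hα).2
  have hm'' : ∀ α ∈ m'', α ∈ S'' := fun α hα => by
    obtain ⟨hαm, hαS'⟩ := Multiset.mem_filter.mp hα
    exact ((hunion ▸ hmS α hαm : α ∈ S' ∪ S'').resolve_left hαS')
  have hS' : S' ⊆ S := hunion ▸ Set.subset_union_left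
  have hS'' : S'' ⊆ S := hunion ▸ Set.subset_union_right
  have hS'R : S' ⊆ R := hS'.trans hS.1
  have hS''R : S'' ⊆ R := hS''.trans hS.1
  have hsum : m.sum = m'.sum + m''.sum := by rw [← hsplit, Multiset.sum_add]
  have hrest' : m.sum - m'.sum ∈ span ℝ S'' := by
    simpa [hsum] using multiset_sum_mem _ fun α hα => subset_span (hm'' α hα)
  have hrest'' : m.sum - m''.sum ∈ span ℝ S' := by
    simpa [hsum] using multiset_sum_mem _ fun α hα => subset_span (hm' α hα)
  rcases hR.mem_or_mem_or_sum_mem horth hm (fun α hα => hS'R (hm' α hα))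
      (fun α hα => subset_span (hm' α hα)) hrest'
      (fun α hα => ih α (Multiset.mem_of_le (Multiset.filter_le _ _) hα)) with h | h | h'
  · exact Or.inl h
  · exact Or.inr h
  rcases hR.mem_or_mem_or_sum_mem horth.symm hm (fun α hα => hS''R (hm'' α hα))
      (fun α hα => subset_span (hm'' α hα)) hrest''
      (fun α hα hαR => (ih α (Multiset.mem_of_le (Multiset.filter_le _ _) hα) hαR).symm)
      with h | h | h''
  · exact Or.inr h
  · exact Or.inl h
  -- `β` is the sum of two orthogonal simple roots, so their difference would be a root too.
  have hinner : ⟪m'.sum, m''.sum⟫ = 0 :=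
    horth.inner_eq (subset_span (hm' _ h')) (subset_span (hm'' _ h''))
  exact absurd
    (hR.sub_mem_of_inner_eq_zero (hS'R (hm' _ h')) (hS''R (hm'' _ h'')) hinner (hsum ▸ hm))
    (hS.sub_notMem (hS' (hm' _ h')) (hS'' (hm'' _ h''))
      (hdisj.ne_of_mem (hm' _ h') (hm'' _ h'')))

end

/-- If a base splits into two mutually orthogonal parts, every root lies in
the span of one of the parts. -/
theorem stmt6 (R S S' S'' : Set V) (hR : IsGRS R) (hS : IsBase R S)
    (hunion : S = S' ∪ S'') (hdisj : Disjoint S' S'')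
    (horth : ∀ α' ∈ S', ∀ α'' ∈ S'', ⟪α', α''⟫ = 0) :
    ∀ β ∈ R, β ∈ Submodule.span ℝ S' ∨ β ∈ Submodule.span ℝ S'' := by
  have hortho := Submodule.isOrtho_span.mpr horth
  intro β hβ
  rcases hS.2.2.2 β hβ with hpos | hneg
  · obtain ⟨m, hmS, rfl⟩ := hpos.exists_multiset_sum_eq
    exact hS.multiset_sum_mem_span_or_mem_span hR hunion hdisj hortho m hmS hβ
  · obtain ⟨m, hmS, hm⟩ := hneg.exists_multiset_sum_eq
    simpa [hm] using
      hS.multiset_sum_mem_span_or_mem_span hR hunion hdisj hortho m hmS (hm ▸ hR.neg_mem hβ)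
end

section
/- Let (R,V) be a generalized root system and let R⁺ ⊆ R be a positive system. Then there exists a base S of R such that R⁺ = R⁺(S). -/
open scoped RealInnerProductSpace

variable {V : Type*} [NormedAddCommGroup V] [InnerProductSpace ℝ V] [FiniteDimensional ℝ V]

/-!
The base is the set `S` of nonzero indecomposable elements of `P`. A nonempty multiset of elements
of `P \ {0}` never sums to zero: two of its elements make an obtuse angle, so they can be merged
into their sum, which again lies in `P \ {0}`. Hence `x < x + p` (`p ∈ P \ {0}`) generates a strict
order on the finite set `P`, and well-founded induction writes every element of `P` as a sum of
elements of `S`. Distinct elements of `S` make obtuse angles, so `S` is linearly independent as soon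
as `P \ {0}` carries no nontrivial nonnegative real relation. For that, take `y` maximal in
`P \ {0}`: then `⟪x, y⟫ ≥ 0` on `P`, so any such relation lives in `yᗮ`, and one recurses on the
smaller set `{x ∈ P | ⟪x, y⟫ = 0}`.
-/

section

variable {E : Type*} [NormedAddCommGroup E]

def simpleRoots (P : Set E) : Set E := {x | IsIndecomposableIn P x ∧ x ≠ 0}

def IsBelow (P : Set E) (x y : E) : Prop :=
  ∃ m : Multiset E, m ≠ 0 ∧ (∀ z ∈ m, z ∈ P \ {0}) ∧ y = x + m.sum

theorem isBelow_add {P : Set E} (x : E) {y : E} (hy : y ∈ P \ {0}) : IsBelow P x (x + y) :=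
  ⟨{y}, by simp, by simpa using hy, by simp⟩

variable [InnerProductSpace ℝ E]

/-- Unlike `IsPositiveSystem`, these properties pass to `{x ∈ P | ⟪x, y⟫ = 0}`, which makes
induction on `P.ncard` possible. -/
structure IsPointedObtuseClosed (P : Set E) : Prop where
  finite : P.Finite
  add_mem : ∀ ⦃α⦄, α ∈ P → ∀ ⦃β⦄, β ∈ P → ⟪α, β⟫ < 0 → α + β ∈ P
  eq_zero_of_neg_mem : ∀ ⦃α⦄, α ∈ P → -α ∈ P → α = 0

namespace IsNonnegIntComb

variable {S : Set E}

theorem zero (S : Set E) : IsNonnegIntComb S 0 :=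
  ⟨0, by simp, fun _ => le_rfl, by simp⟩

theorem of_mem {v : E} (hv : v ∈ S) : IsNonnegIntComb S v := by
  classical
  refine ⟨Finsupp.single v 1, ?_, fun x => ?_, by simp⟩
  · simpa using hv
  · rw [Finsupp.single_apply]; split_ifs <;> norm_num

theorem add {v w : E} (hv : IsNonnegIntComb S v) (hw : IsNonnegIntComb S w) :
    IsNonnegIntComb S (v + w) := by
  classical
  obtain ⟨c, hcS, hc, rfl⟩ := hv
  obtain ⟨d, hdS, hd, rfl⟩ := hw
  refine ⟨c + d, ?_, fun x => add_nonneg (hc x) (hd x), ?_⟩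
  · exact (Finset.coe_subset.2 Finsupp.support_add).trans (by simpa using ⟨hcS, hdS⟩)
  · rw [Finsupp.sum_add_index' (by simp) (fun _ _ _ => by push_cast; rw [add_smul])]

theorem mem_span {v : E} (hv : IsNonnegIntComb S v) : v ∈ Submodule.span ℝ S := by
  obtain ⟨c, hcS, -, rfl⟩ := hv
  exact Submodule.sum_mem _ fun x hx => Submodule.smul_mem _ _ (Submodule.subset_span (hcS hx))

theorem exists_linearCombination {v : E} (hv : IsNonnegIntComb S v) :
    ∃ a : E →₀ ℝ, ↑a.support ⊆ S ∧ 0 ≤ a ∧ Finsupp.linearCombination ℝ id a = v := by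
  obtain ⟨c, hcS, hc, rfl⟩ := hv
  refine ⟨c.mapRange (↑) Int.cast_zero, ?_, fun x => by simpa using hc x, ?_⟩
  · exact (Finset.coe_subset.2 Finsupp.support_mapRange).trans hcS
  · rw [Finsupp.linearCombination_apply, Finsupp.sum_mapRange_index (by simp)]
    rfl

end IsNonnegIntComb

namespace IsPointedObtuseClosed

variable {P : Set E}

theorem add_mem_diff (hP : IsPointedObtuseClosed P) {α β : E} (hα : α ∈ P) (hβ : β ∈ P)
    (h : ⟪α, β⟫ < 0) : α + β ∈ P \ {0} := by
  refine ⟨hP.add_mem hα hβ h, fun hαβ => ?_⟩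
  have hα0 : α = 0 := hP.eq_zero_of_neg_mem hα (eq_neg_of_add_eq_zero_right hαβ ▸ hβ)
  simp [hα0] at h

theorem sep_inner_eq_zero (hP : IsPointedObtuseClosed P) (y : E) :
    IsPointedObtuseClosed {x ∈ P | ⟪x, y⟫ = 0} where
  finite := hP.finite.sep _
  add_mem _ hα _ hβ h := ⟨hP.add_mem hα.1 hβ.1 h, by rw [inner_add_left, hα.2, hβ.2, add_zero]⟩
  eq_zero_of_neg_mem _ hα hα' := hP.eq_zero_of_neg_mem hα.1 hα'.1

theorem multiset_sum_ne_zero (hP : IsPointedObtuseClosed P) {m : Multiset E}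
    (hmP : ∀ x ∈ m, x ∈ P \ {0}) (hm : m ≠ 0) : m.sum ≠ 0 := by
  induction hn : Multiset.card m using Nat.strong_induction_on generalizing m with
  | _ n ih =>
  obtain ⟨p, hp⟩ := Multiset.exists_mem_of_ne_zero hm
  obtain ⟨t, rfl⟩ := Multiset.exists_cons_of_mem hp
  obtain ⟨hpP, hp0⟩ := hmP p hp
  intro hsum
  rw [Multiset.sum_cons] at hsum
  -- `⟪p, t.sum⟫ = -‖p‖² < 0`, so `p` makes an obtuse angle with some `q ∈ t`; merge them.
  obtain ⟨q, hq, hpq⟩ : ∃ q ∈ t, ⟪p, q⟫ < 0 := by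
    by_contra! h
    have hnonneg : 0 ≤ ⟪p, t.sum⟫ :=
      Multiset.sum_induction (fun v => 0 ≤ ⟪p, v⟫) t
        (fun v w hv hw => by rw [inner_add_right]; exact add_nonneg hv hw) (by simp) h
    rw [eq_neg_of_add_eq_zero_right hsum, inner_neg_right, real_inner_self_eq_norm_sq] at hnonneg
    have : 0 < ‖p‖ := norm_pos_iff.2 hp0
    nlinarith
  obtain ⟨u, rfl⟩ := Multiset.exists_cons_of_mem hq
  have hmerged : ∀ x ∈ (p + q) ::ₘ u, x ∈ P \ {0} := by
    simp only [Multiset.mem_cons, forall_eq_or_imp] at hmP ⊢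
    exact ⟨hP.add_mem_diff hpP hmP.2.1.1 hpq, hmP.2.2⟩
  refine ih _ ?_ hmerged Multiset.cons_ne_zero rfl ?_
  · simp [← hn]
  · rw [Multiset.sum_cons, ← hsum, Multiset.sum_cons, add_assoc]

theorem isStrictOrder_isBelow (hP : IsPointedObtuseClosed P) : IsStrictOrder E (IsBelow P) where
  irrefl x := by
    rintro ⟨m, hm, hmP, hx⟩
    exact hP.multiset_sum_ne_zero hmP hm (by simpa using hx)
  trans x y z := by
    rintro ⟨m, hm, hmP, rfl⟩ ⟨n, -, hnP, rfl⟩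
    refine ⟨m + n, by simp [hm], fun z hz => ?_, by rw [Multiset.sum_add, add_assoc]⟩
    rcases Multiset.mem_add.1 hz with hz | hz
    exacts [hmP z hz, hnP z hz]

theorem exists_inner_nonneg (hP : IsPointedObtuseClosed P) (hne : (P \ {0}).Nonempty) :
    ∃ y ∈ P \ {0}, ∀ x ∈ P, 0 ≤ ⟪x, y⟫ := by
  by_contra! h
  have := hP.isStrictOrder_isBelow
  obtain ⟨y, hy⟩ := hne
  -- otherwise `y ↦ y + x` would climb forever in the finite strict order `IsBelow P`
  refine (hP.finite.wellFoundedOn (r := Function.swap (IsBelow P))).induction hy.1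
    (P := fun y => y ∉ P \ {0}) (fun y hyP ih hy => ?_) hy
  obtain ⟨x, hxP, hxy⟩ := h y hy
  have hx0 : x ≠ 0 := by rintro rfl; simp at hxy
  have hyx : ⟪y, x⟫ < 0 := by rwa [real_inner_comm]
  exact ih (y + x) (hP.add_mem hyP hxP hyx) (isBelow_add y ⟨hxP, hx0⟩) (hP.add_mem_diff hyP hxP hyx)

theorem eq_zero_of_linearCombination_eq_zero (hP : IsPointedObtuseClosed P) {a : E →₀ ℝ}
    (haP : ↑a.support ⊆ P \ {0}) (ha : 0 ≤ a) (hsum : Finsupp.linearCombination ℝ id a = 0) :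
    a = 0 := by
  induction hn : P.ncard using Nat.strong_induction_on generalizing P with
  | _ n ih =>
  rcases (P \ {0}).eq_empty_or_nonempty with hP0 | hne
  · rw [hP0, Set.subset_empty_iff, Finset.coe_eq_empty, Finsupp.support_eq_empty] at haP
    exact haP
  -- all terms of `⟪∑ a x • x, y⟫ = 0` are nonnegative, so `a` lives on `yᗮ`
  obtain ⟨y, hy, hyP⟩ := hP.exists_inner_nonneg hne
  have hterms : ∀ x ∈ a.support, a x * ⟪x, y⟫ = 0 := by
    refine (Finset.sum_eq_zero_iff_of_nonneg fun x hx => mul_nonneg (ha x) (hyP x (haP hx).1)).1 ?_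
    simpa [Finsupp.linearCombination_apply, Finsupp.sum, sum_inner, real_inner_smul_left] using
      congrArg (⟪·, y⟫) hsum
  refine ih _ ?_ (hP.sep_inner_eq_zero y) (fun x hx => ⟨⟨(haP hx).1, ?_⟩, (haP hx).2⟩) rfl
  · rw [← hn]
    refine Set.ncard_lt_ncard ⟨Set.sep_subset _ _, fun h => hy.2 ?_⟩ hP.finite
    exact inner_self_eq_zero.1 (h hy.1).2
  · exact (mul_eq_zero.1 (hterms x hx)).resolve_left (Finsupp.mem_support_iff.1 hx)

theorem eq_zero_of_isNonnegIntComb_of_neg_mem (hP : IsPointedObtuseClosed P) {S : Set E}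
    (hS : S ⊆ P \ {0}) {v : E} (hv : IsNonnegIntComb S v) (hv' : -v ∈ P) : v = 0 := by
  classical
  by_contra hv0
  obtain ⟨a, haS, ha, hav⟩ := hv.exists_linearCombination
  have hrel : a + Finsupp.single (-v) 1 = 0 := by
    refine hP.eq_zero_of_linearCombination_eq_zero ?_ (add_nonneg ha ?_) (by simp [hav])
    · intro x hx
      rcases Finset.mem_union.1 (Finsupp.support_add hx) with hx | hx
      · exact hS (haS hx)
      · rw [Finset.mem_singleton.1 (Finsupp.support_single_subset hx)]
        exact ⟨hv', neg_ne_zero.2 hv0⟩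
    · exact Finsupp.single_nonneg.2 zero_le_one
  have := DFunLike.congr_fun hrel (-v)
  simp only [Finsupp.add_apply, Finsupp.single_eq_same, Finsupp.coe_zero, Pi.zero_apply] at this
  linarith [show 0 ≤ a (-v) from ha (-v)]

theorem isNonnegIntComb_simpleRoots (hP : IsPointedObtuseClosed P) {p : E} (hp : p ∈ P) :
    IsNonnegIntComb (simpleRoots P) p := by
  have := hP.isStrictOrder_isBelow
  refine (hP.finite.wellFoundedOn (r := IsBelow P)).induction hp
    (P := IsNonnegIntComb (simpleRoots P)) fun p hp ih => ?_
  by_cases hp0 : p = 0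
  · exact hp0 ▸ IsNonnegIntComb.zero _
  by_cases hind : IsIndecomposableIn P p
  · exact .of_mem ⟨hind, hp0⟩
  simp only [IsIndecomposableIn, not_and, not_not] at hind
  obtain ⟨γ, hγ, δ, hδ, hγ0, hδ0, rfl⟩ := hind hp
  refine (ih γ hγ (isBelow_add γ ⟨hδ, hδ0⟩)).add (ih δ hδ ?_)
  simpa [add_comm] using isBelow_add δ ⟨hγ, hγ0⟩

end IsPointedObtuseClosed

theorem linearIndepOn_of_pairwise_inner_nonpos {S : Set E}
    (hS : S.Pairwise fun x y => ⟪x, y⟫ ≤ 0)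
    (hpos : ∀ a : E →₀ ℝ, ↑a.support ⊆ S → 0 ≤ a → Finsupp.linearCombination ℝ id a = 0 → a = 0) :
    LinearIndepOn ℝ id S := by
  rw [linearIndepOn_iff]
  intro l hl hsum
  have hlS := (Finsupp.mem_supported ℝ l).1 hl
  set L := Finsupp.linearCombination ℝ (id : E → E)
  set pos := l.mapRange (·⁺) posPart_zero
  set neg := l.mapRange (·⁻) negPart_zero
  have hl : l = pos - neg := by ext x; simp [pos, neg]
  have hpos_supp : ↑pos.support ⊆ S := (Finset.coe_subset.2 Finsupp.support_mapRange).trans hlS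
  have hneg_supp : ↑neg.support ⊆ S := (Finset.coe_subset.2 Finsupp.support_mapRange).trans hlS
  have hLeq : L pos = L neg := by rwa [hl, map_sub, sub_eq_zero] at hsum
  -- the positive and negative parts are supported on disjoint parts of the obtuse set `S`
  have hinner : ⟪L pos, L neg⟫ ≤ 0 := by
    simp only [L, Finsupp.linearCombination_apply, Finsupp.sum, sum_inner, inner_sum,
      real_inner_smul_left, real_inner_smul_right, id]
    refine Finset.sum_nonpos fun x hx => Finset.sum_nonpos fun y hy => ?_
    rcases eq_or_ne x y with rfl | hxy
    · rcases le_total 0 (l x) with h | h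
      · simp [pos, neg, negPart_eq_zero.2 h]
      · simp [pos, neg, posPart_eq_zero.2 h]
    · have hyx : ⟪y, x⟫ ≤ 0 := hS (hpos_supp hy) (hneg_supp hx) hxy.symm
      exact mul_nonpos_of_nonneg_of_nonpos (negPart_nonneg _)
        (mul_nonpos_of_nonneg_of_nonpos (posPart_nonneg _) hyx)
  have hLpos : L pos = 0 := by
    rw [← hLeq] at hinner
    exact inner_self_eq_zero.1 (le_antisymm hinner real_inner_self_nonneg)
  rw [hl, hpos pos hpos_supp (fun x => posPart_nonneg _) hLpos,
    hpos neg hneg_supp (fun x => negPart_nonneg _) (hLeq ▸ hLpos), sub_zero]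

namespace IsPositiveSystem

variable {R P : Set E}

theorem isPointedObtuseClosed (hP : IsPositiveSystem R P) (hR : IsGRS R) :
    IsPointedObtuseClosed P where
  finite := hR.2.1.subset hP.1
  add_mem α hα β hβ h := hP.2.1 α hα β hβ ((hR.2.2.2 α (hP.1 hα) β (hP.1 hβ)).1 h)
  eq_zero_of_neg_mem α hα hα' := by
    have hαP : α ∈ P ∩ -P := ⟨hα, hα'⟩
    rwa [hP.2.2.2] at hαP

theorem pairwise_inner_nonpos_simpleRoots (hP : IsPositiveSystem R P) (hR : IsGRS R) :
    (simpleRoots P).Pairwise fun α β => ⟪α, β⟫ ≤ 0 := by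
  rintro α ⟨hα, hα0⟩ β ⟨hβ, hβ0⟩ hne
  by_contra! h
  have hαβ : α - β ∈ P ∪ -P := hP.2.2.1 ▸ (hR.2.2.2 α (hP.1 hα.1) β (hP.1 hβ.1)).2.1 h
  rcases hαβ with hαβ | hβα
  · exact hα.2 ⟨β, hβ.1, α - β, hαβ, hβ0, sub_ne_zero.2 hne, by abel⟩
  · exact hβ.2 ⟨α, hα.1, β - α, by simpa using hβα, hα0, sub_ne_zero.2 hne.symm, by abel⟩

end IsPositiveSystem

end

/-- Every positive system comes from a base. -/
theorem stmt11 (R P : Set V) (hR : IsGRS R) (hP : IsPositiveSystem R P) :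
    ∃ S : Set V, IsBase R S ∧ P = posRoots R S := by
  have hPc := hP.isPointedObtuseClosed hR
  have hSP : simpleRoots P ⊆ P \ {0} := fun x hx => ⟨hx.1.1, hx.2⟩
  have hroots : ∀ β ∈ R,
      IsNonnegIntComb (simpleRoots P) β ∨ IsNonnegIntComb (simpleRoots P) (-β) := by
    intro β hβ
    rw [hP.2.2.1] at hβ
    exact hβ.imp hPc.isNonnegIntComb_simpleRoots hPc.isNonnegIntComb_simpleRoots
  refine ⟨simpleRoots P, ⟨fun x hx => hP.1 hx.1.1, ?_, ?_, hroots⟩, ?_⟩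
  · exact linearIndepOn_of_pairwise_inner_nonpos (hP.pairwise_inner_nonpos_simpleRoots hR)
      fun a ha => hPc.eq_zero_of_linearCombination_eq_zero (ha.trans hSP)
  · rw [eq_top_iff, ← hR.2.2.1, Submodule.span_le]
    intro β hβ
    rcases hroots β hβ with h | h
    · exact h.mem_span
    · simpa using Submodule.neg_mem _ h.mem_span
  · ext p
    refine ⟨fun hp => ⟨hP.1 hp, hPc.isNonnegIntComb_simpleRoots hp⟩, fun ⟨hpR, hp⟩ => ?_⟩
    rcases (hP.2.2.1 ▸ hpR : p ∈ P ∪ -P) with hp' | hp'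
    · exact hp'
    · simpa [hPc.eq_zero_of_isNonnegIntComb_of_neg_mem hSP hp hp'] using hp'
end

section
/- Let (R,V) be a generalized root system, S a base of R, I ⊆ S, R⁺ = R⁺(S), and π_I : V → V_I^⊥ the orthogonal projection onto the orthogonal complement of the span of I. If ν ∈ π_I(R) is nonzero, then the fibre R^ν := {β ∈ R : π_I(β) = ν} satisfies R^ν ⊆ R⁺ or R^ν ⊆ −R⁺. -/
open scoped RealInnerProductSpace

variable {V : Type*} [NormedAddCommGroup V] [InnerProductSpace ℝ V] [FiniteDimensional ℝ V]

/-! If a root with nonnegative coordinates `β` and a root with nonpositive coordinates `β'` had the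
same projection `ν`, then `β + (-β')` would lie in `span I`. Since `I` is part of the base `S`,
the coordinates of `β` and `-β'` outside `I` are nonnegative and sum to zero, so they vanish and
`β ∈ span I`, i.e. `ν = π_I β = 0`. Hence a fibre over `ν ≠ 0` cannot mix signs. -/

section

variable {E : Type*} [NormedAddCommGroup E] [InnerProductSpace ℝ E] {S : Set E}

theorem repr_nonneg_of_isNonnegIntComb (b : Module.Basis S ℝ E) (hb : ⇑b = (↑))
    {v : E} (hv : IsNonnegIntComb S v) (s : S) : 0 ≤ b.repr v s := by
  obtain ⟨c, hcS, hc, rfl⟩ := hv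
  rw [Finsupp.sum, map_sum, Finsupp.finsetSum_apply]
  refine Finset.sum_nonneg fun α hα => ?_
  have hα' : b ⟨α, hcS hα⟩ = α := congrFun hb _
  rw [← hα', map_smul, b.repr_self, Finsupp.smul_apply, smul_eq_mul]
  exact mul_nonneg (by exact_mod_cast hc _) (Finsupp.single_nonneg.mpr zero_le_one s)

theorem span_eq_span_image_basis (b : Module.Basis S ℝ E) (hb : ⇑b = (↑)) {I : Set E}
    (hI : I ⊆ S) : Submodule.span ℝ I = Submodule.span ℝ (b '' ((↑) ⁻¹' I)) := by
  rw [hb, Subtype.image_preimage_coe, Set.inter_eq_right.mpr hI]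

theorem mem_span_of_isNonnegIntComb_add (b : Module.Basis S ℝ E) (hb : ⇑b = (↑)) {I : Set E}
    (hI : I ⊆ S) {x y : E} (hx : IsNonnegIntComb S x) (hy : IsNonnegIntComb S y)
    (hxy : x + y ∈ Submodule.span ℝ I) : x ∈ Submodule.span ℝ I := by
  rw [span_eq_span_image_basis b hb hI, b.mem_span_image] at hxy ⊢
  intro s hs
  by_contra hsI
  have hsum : b.repr x s + b.repr y s = 0 := by
    simpa [Finsupp.notMem_support_iff] using fun h => hsI (hxy (Finsupp.mem_support_iff.mpr h))
  have := repr_nonneg_of_isNonnegIntComb b hb hx s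
  have := repr_nonneg_of_isNonnegIntComb b hb hy s
  exact Finsupp.mem_support_iff.mp hs (by linarith)

theorem IsGRS.zero_mem_s14 {R : Set E} (hR : IsGRS R) : (0 : E) ∈ R := by
  obtain ⟨α, hα⟩ := hR.1
  by_cases h : α = 0
  · exact h ▸ hα
  · simpa using (hR.2.2.2 α hα α hα).2.1 (real_inner_self_pos.mpr h)

theorem IsGRS.neg_mem_s14 {R : Set E} (hR : IsGRS R) {β : E} (hβ : β ∈ R) : -β ∈ R := by
  simpa using ((hR.2.2.2 0 hR.zero_mem_s14 β hβ).2.2 (inner_zero_left _)).mp (by simpa using hβ)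

end

theorem projAway_eq_zero_iff {I : Set V} {v : V} : projAway I v = 0 ↔ v ∈ Submodule.span ℝ I := by
  rw [projAway, Submodule.orthogonalProjectionOnto_eq_zero_iff, Submodule.orthogonal_orthogonal]

theorem projAway_eq_projAway_iff {I : Set V} {v w : V} :
    projAway I v = projAway I w ↔ v - w ∈ Submodule.span ℝ I := by
  rw [← projAway_eq_zero_iff, ← sub_eq_zero]
  simp only [projAway, map_sub]

theorem stmt14_general (R S I : Set V) (hR : IsGRS R) (hS : IsBase R S) (hI : I ⊆ S)
    (ν : ↥((Submodule.span ℝ I)ᗮ)) (hν0 : ν ≠ 0) :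
    {β ∈ R | projAway I β = ν} ⊆ posRoots R S ∨
      {β ∈ R | projAway I β = ν} ⊆ -posRoots R S := by
  set F := {β ∈ R | projAway I β = ν}
  obtain ⟨-, hli, hsp, hsign⟩ := hS
  let b := Module.Basis.mk hli (by rw [Subtype.range_coe]; exact hsp.ge)
  have hb : ⇑b = (↑) := Module.Basis.coe_mk _ _
  have not_mixed : ∀ β ∈ F, IsNonnegIntComb S β → ∀ β' ∈ F, ¬IsNonnegIntComb S (-β') := by
    rintro β ⟨-, hβ⟩ hβpos β' ⟨-, hβ'⟩ hβ'neg
    have hdiff : β + -β' ∈ Submodule.span ℝ I := by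
      rw [← sub_eq_add_neg, ← projAway_eq_projAway_iff, hβ, hβ']
    have hβI := mem_span_of_isNonnegIntComb_add b hb hI hβpos hβ'neg hdiff
    exact hν0 (hβ ▸ projAway_eq_zero_iff.mpr hβI)
  by_cases hall : ∀ β ∈ F, IsNonnegIntComb S β
  · exact Or.inl fun β hβ => ⟨hβ.1, hall β hβ⟩
  push Not at hall
  obtain ⟨β₀, hβ₀, hβ₀pos⟩ := hall
  have hβ₀neg := (hsign β₀ hβ₀.1).resolve_left hβ₀pos
  refine Or.inr fun β hβ => Set.mem_neg.mpr ⟨hR.neg_mem_s14 hβ.1, ?_⟩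
  exact (hsign β hβ.1).resolve_left fun hβpos => not_mixed β hβ hβpos β₀ hβ₀ hβ₀neg

/-- For nonzero `ν ∈ π_I(R)`, the fibre `R^ν = π_I⁻¹(ν) ∩ R` is contained
in `R⁺` or in `-R⁺`. -/
theorem stmt14 (R S I : Set V) (hR : IsGRS R) (hS : IsBase R S) (hI : I ⊆ S)
    (ν : ↥((Submodule.span ℝ I)ᗮ)) (hν : ν ∈ projAway I '' R) (hν0 : ν ≠ 0) :
    {β ∈ R | projAway I β = ν} ⊆ posRoots R S ∨
      {β ∈ R | projAway I β = ν} ⊆ -posRoots R S :=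
  stmt14_general R S I hR hS hI ν hν0
end

section
/- Let (R,V) be an irreducible generalized root system with dim V ≥ 2. Then for every nonzero α ∈ R, the vector 5α does not belong to R. -/
open scoped RealInnerProductSpace

variable {V : Type*} [NormedAddCommGroup V] [InnerProductSpace ℝ V] [FiniteDimensional ℝ V]

/-! If `5α ∈ R`, let `Nα` (`N ≥ 5`) be the largest multiple of `α` in `R`; all `kα` with
`k ≤ N` are roots. For a root `γ` with `⟪γ, α⟫ > 0` and `γ + α ∉ R`, the `α`-string through `γ`
reaches beyond `γ - (N + 3)α`, and for `m > N` the closure axioms applied to `γ` and `γ - mα` give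
`⟪γ, γ⟫ = m⟪γ, α⟫` or `2γ - mα ∈ R`.

Irreducibility and rank `≥ 2` provide a root `β ∉ ℝα` with largest `⟪β, α⟫ > 0`, so `β + α ∉ R`.
Let `w` be the component of `β` orthogonal to `α`. Applying the dichotomy to a lexicographic
maximizer of `(⟪·, w⟫, ±⟪·, α⟫)` shows that every root maximizing `⟪·, w⟫` is orthogonal to `α`.
Applying it, with `-α` in place of `α`, to `τ - β` for such a maximizer `τ` bounds the maximum by
`2⟪β, w⟫`. So a root `2β - mα` is a maximizer and `2⟪β, α⟫ = m⟪α, α⟫`. For each of `m = N + 1, N + 2, N + 3` one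
of two equations, each linear in `m` with nonzero slope, holds: one of them holds twice. -/

section RootClosed

variable {E : Type*} [NormedAddCommGroup E] [InnerProductSpace ℝ E]

theorem exists_add_smul_inner_eq_zero_of_notMem_span {α β : E} (hβα : β ∉ ℝ ∙ α) :
    ∃ (w : E) (s : ℝ), β = w + s • α ∧ ⟪α, w⟫ = 0 ∧ 0 < ⟪β, w⟫ := by
  have hw : ⟪α, β - (⟪β, α⟫ / ⟪α, α⟫) • α⟫ = 0 := by
    rw [inner_sub_right, real_inner_smul_right, real_inner_comm, div_mul_cancel_of_imp, sub_self]
    intro ha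
    rw [inner_self_eq_zero.mp ha, inner_zero_right]
  have hw0 : β - (⟪β, α⟫ / ⟪α, α⟫) • α ≠ 0 := fun h0 =>
    hβα (Submodule.mem_span_singleton.mpr ⟨_, (sub_eq_zero.mp h0).symm⟩)
  refine ⟨_, _, (sub_add_cancel _ _).symm, hw, ?_⟩
  calc 0 < ⟪β - (⟪β, α⟫ / ⟪α, α⟫) • α, β - (⟪β, α⟫ / ⟪α, α⟫) • α⟫ := real_inner_self_pos.mpr hw0
    _ = _ := by rw [inner_sub_left, real_inner_smul_left, hw, mul_zero, sub_zero]

def IsRootClosed (R : Set E) : Prop :=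
  ∀ α ∈ R, ∀ β ∈ R,
    (⟪α, β⟫ < 0 → α + β ∈ R) ∧ (0 < ⟪α, β⟫ → α - β ∈ R) ∧
      (⟪α, β⟫ = 0 → (α + β ∈ R ↔ α - β ∈ R))

def IsLargestMultiple (R : Set E) (α : E) (N : ℕ) : Prop :=
  (N : ℝ) • α ∈ R ∧ ∀ m : ℕ, N < m → (m : ℝ) • α ∉ R

theorem exists_isLargestMultiple {R : Set E} (hfin : R.Finite) {α : E} (hα0 : α ≠ 0) {n : ℕ}
    (hn : (n : ℝ) • α ∈ R) : ∃ N, n ≤ N ∧ IsLargestMultiple R α N := by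
  have hinj : Function.Injective fun k : ℕ => (k : ℝ) • α := fun k l h => by
    exact_mod_cast smul_left_injective ℝ hα0 h
  obtain ⟨N, hN, hNmax⟩ := Set.exists_max_image _ id (hfin.preimage hinj.injOn) ⟨n, hn⟩
  exact ⟨N, hNmax n hn, hN, fun m hm hmR => (hNmax m hmR).not_gt hm⟩

namespace IsRootClosed

variable {R : Set E} {α γ x y : E}

theorem add_mem (hR : IsRootClosed R) (hx : x ∈ R) (hy : y ∈ R) (h : ⟪x, y⟫ < 0) :
    x + y ∈ R :=
  (hR x hx y hy).1 h

theorem sub_mem (hR : IsRootClosed R) (hx : x ∈ R) (hy : y ∈ R) (h : 0 < ⟪x, y⟫) :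
    x - y ∈ R :=
  (hR x hx y hy).2.1 h

theorem add_mem_iff_sub_mem (hR : IsRootClosed R) (hx : x ∈ R) (hy : y ∈ R)
    (h : ⟪x, y⟫ = 0) : x + y ∈ R ↔ x - y ∈ R :=
  (hR x hx y hy).2.2 h

theorem zero_mem (hR : IsRootClosed R) (hx : x ∈ R) : (0 : E) ∈ R := by
  by_cases hx0 : x = 0
  · exact hx0 ▸ hx
  · simpa using hR.sub_mem hx hx (real_inner_self_pos.mpr hx0)

theorem neg_mem (hR : IsRootClosed R) (hx : x ∈ R) : -x ∈ R := by
  have h0 := hR.zero_mem hx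
  simpa using (hR.add_mem_iff_sub_mem h0 hx (inner_zero_left x)).mp (by simpa using hx)

theorem inner_eq_zero_or_add_mem (hR : IsRootClosed R) (hx : x ∈ R) (hy : y ∈ R)
    (hxy : x - y ∉ R) : ⟪x, y⟫ = 0 ∨ x + y ∈ R := by
  rcases lt_trichotomy ⟪x, y⟫ 0 with h | h | h
  · exact .inr (hR.add_mem hx hy h)
  · exact .inl h
  · exact absurd (hR.sub_mem hx hy h) hxy

theorem nat_smul_mem_of_le (hR : IsRootClosed R) (hα : α ∈ R) {n k : ℕ}
    (hn : (n : ℝ) • α ∈ R) (hk : k ≤ n) : (k : ℝ) • α ∈ R := by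
  induction n with
  | zero => simpa [Nat.le_zero.mp hk] using hR.zero_mem hα
  | succ n ih =>
    rcases hk.eq_or_lt with rfl | hlt
    · exact hn
    refine ih ?_ (Nat.lt_succ_iff.mp hlt)
    by_cases hα0 : α = 0
    · simpa [hα0] using hR.zero_mem hα
    have hpos : 0 < ⟪((n + 1 : ℕ) : ℝ) • α, α⟫ := by
      rw [real_inner_smul_left]
      exact mul_pos (by positivity) (real_inner_self_pos.mpr hα0)
    convert hR.sub_mem hn hα hpos using 1
    push_cast
    module

-- The string descends one step past the point where `γ - kα` becomes orthogonal to `α`.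
theorem sub_nat_smul_mem (hR : IsRootClosed R) (hα : α ∈ R) (hγ : γ ∈ R) (hc : 0 < ⟪γ, α⟫)
    (k : ℕ) (hk : (k : ℝ) * ⟪α, α⟫ ≤ ⟪γ, α⟫ + ⟪α, α⟫) : γ - (k : ℝ) • α ∈ R := by
  have ha : 0 ≤ ⟪α, α⟫ := real_inner_self_nonneg
  induction k using Nat.strong_induction_on with
  | _ k ih =>
  rcases k with _ | k
  · simpa using hγ
  push_cast at hk
  have hmem : γ - (k : ℝ) • α ∈ R := ih k k.lt_succ_self (by linarith)
  have hinner : ⟪γ - (k : ℝ) • α, α⟫ = ⟪γ, α⟫ - k * ⟪α, α⟫ := by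
    rw [inner_sub_left, real_inner_smul_left]
  have hstep : γ - ((k + 1 : ℕ) : ℝ) • α = γ - (k : ℝ) • α - α := by
    push_cast
    module
  rw [hstep]
  rcases (show (k : ℝ) * ⟪α, α⟫ ≤ ⟪γ, α⟫ by linarith).lt_or_eq with hlt | heq
  · exact hR.sub_mem hmem hα (by linarith)
  rcases k with _ | k
  · simp at heq
    linarith
  -- `γ - kα ⊥ α`, and `γ - kα + α` is an earlier root of the string
  refine (hR.add_mem_iff_sub_mem hmem hα (by linarith)).mp ?_
  have hprev : γ - ((k + 1 : ℕ) : ℝ) • α + α = γ - (k : ℝ) • α := by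
    push_cast
    module
  push_cast at heq
  rw [hprev]
  exact ih k (by omega) (by linarith)

theorem sub_add_smul_mem (hR : IsRootClosed R) (hα : α ∈ R) (hγ : γ ∈ R) {t : ℝ} (ht : 0 < t)
    (htα : t • α ∈ R) {i : ℕ} (hi : (i : ℝ) * ⟪α, α⟫ < ⟪γ, α⟫) : γ - (t + i) • α ∈ R := by
  have ha : 0 ≤ ⟪α, α⟫ := real_inner_self_nonneg
  have hia : 0 ≤ (i : ℝ) * ⟪α, α⟫ := mul_nonneg i.cast_nonneg ha
  have hmem := hR.sub_nat_smul_mem hα hγ (by linarith) i (by linarith)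
  have hpos : 0 < ⟪γ - (i : ℝ) • α, t • α⟫ := by
    have : ⟪γ - (i : ℝ) • α, t • α⟫ = t * (⟪γ, α⟫ - i * ⟪α, α⟫) := by
      rw [inner_sub_left, real_inner_smul_left, real_inner_smul_right, real_inner_smul_right]
      ring
    rw [this]
    exact mul_pos ht (by linarith)
  convert hR.sub_mem hmem htα hpos using 1
  module

-- Otherwise some `γ - mα` would pair negatively with `(m + 1)α`, and their sum is `γ + α`.
theorem nat_mul_inner_self_le (hR : IsRootClosed R) (hα : α ∈ R) (hγ : γ ∈ R)
    (hc : 0 < ⟪γ, α⟫) (hγα : γ + α ∉ R) {N : ℕ} (hN : (N : ℝ) • α ∈ R) :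
    (N : ℝ) * ⟪α, α⟫ ≤ ⟪γ, α⟫ + ⟪α, α⟫ := by
  have ha : 0 ≤ ⟪α, α⟫ := real_inner_self_nonneg
  suffices ∀ m ≤ N, (m : ℝ) * ⟪α, α⟫ ≤ ⟪γ, α⟫ + ⟪α, α⟫ from this N le_rfl
  intro m hm
  induction m with
  | zero => rw [Nat.cast_zero, zero_mul]; linarith
  | succ m ih =>
    have hmem := hR.sub_nat_smul_mem hα hγ hc m (ih (by omega))
    by_contra hlt
    push_cast at hlt
    have hneg : ⟪γ - (m : ℝ) • α, ((m + 1 : ℕ) : ℝ) • α⟫ < 0 := by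
      have : ⟪γ - (m : ℝ) • α, ((m + 1 : ℕ) : ℝ) • α⟫
          = ((m : ℝ) + 1) * (⟪γ, α⟫ - m * ⟪α, α⟫) := by
        rw [inner_sub_left, real_inner_smul_left, real_inner_smul_right, real_inner_smul_right]
        push_cast
        ring
      rw [this]
      exact mul_neg_of_pos_of_neg (by positivity) (by linarith)
    apply hγα
    convert hR.add_mem hmem (hR.nat_smul_mem_of_le hα hN hm) hneg using 1
    push_cast
    module

theorem exists_mem_notMem_span_inner_pos (hR : IsRootClosed R)
    (hspan : Submodule.span ℝ R = ⊤) (hirr : IsIrreducibleGRS R)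
    (hdim : 2 ≤ Module.finrank ℝ E) (hα : α ∈ R) (hα0 : α ≠ 0) :
    ∃ β ∈ R, β ∉ ℝ ∙ α ∧ 0 < ⟪β, α⟫ := by
  by_contra! hcon
  have horth : ∀ β ∈ R, β ∉ ℝ ∙ α → ⟪β, α⟫ = 0 := fun β hβ hβα => by
    have := hcon (-β) (hR.neg_mem hβ) (by rwa [Submodule.neg_mem_iff])
    rw [inner_neg_left] at this
    linarith [hcon β hβ hβα]
  have hcover : R = {β ∈ R | β ∈ ℝ ∙ α} ∪ {β ∈ R | β ∉ ℝ ∙ α} := by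
    ext β
    by_cases hβα : β ∈ ℝ ∙ α <;> simp [hβα]
  have hperp : ∀ x ∈ {β ∈ R | β ∈ ℝ ∙ α}, ∀ y ∈ {β ∈ R | β ∉ ℝ ∙ α}, ⟪x, y⟫ = 0 := by
    rintro x ⟨-, hx⟩ y ⟨hy, hyα⟩
    obtain ⟨t, rfl⟩ := Submodule.mem_span_singleton.mp hx
    rw [real_inner_smul_left, real_inner_comm, horth y hy hyα, mul_zero]
  rcases hirr _ _ hcover hperp with h₁ | h₂
  · exact hα0 (h₁ ⟨hα, Submodule.mem_span_singleton_self α⟩)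
  · have hle : Submodule.span ℝ R ≤ ℝ ∙ α := Submodule.span_le.mpr fun β hβ => by
      by_contra hβα
      exact hβα ((h₂ ⟨hβ, hβα⟩ : β = 0) ▸ Submodule.zero_mem _)
    have := Submodule.finrank_mono hle
    rw [hspan, finrank_top, finrank_span_singleton hα0] at this
    omega

end IsRootClosed

namespace IsLargestMultiple

variable {R : Set E} {α : E} {N : ℕ}

theorem ne_zero (h : IsLargestMultiple R α N) : α ≠ 0 := by
  rintro rfl
  exact h.2 (N + 1) N.lt_succ_self (by simpa using h.1)

theorem neg (hR : IsRootClosed R) (h : IsLargestMultiple R α N) :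
    IsLargestMultiple R (-α) N :=
  ⟨by simpa using hR.neg_mem h.1, fun m hm hmR => h.2 m hm (by simpa using hR.neg_mem hmR)⟩

theorem inner_self_eq_or_two_smul_sub_mem (hR : IsRootClosed R) (h : IsLargestMultiple R α N)
    {x : E} (hx : x ∈ R) {i : ℕ} (hi : 0 < i) (hxi : x - ((N : ℝ) + i) • α ∈ R) :
    ⟪x, x⟫ = ((N : ℝ) + i) * ⟪x, α⟫ ∨ (2 : ℝ) • x - ((N : ℝ) + i) • α ∈ R := by
  have hNi : ((N : ℝ) + i) • α ∉ R := by exact_mod_cast h.2 (N + i) (by omega)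
  rcases hR.inner_eq_zero_or_add_mem hx hxi (by rwa [sub_sub_cancel]) with h0 | hmem
  · left
    rw [inner_sub_right, real_inner_smul_right] at h0
    linarith
  · right
    convert hmem using 1
    module

variable {w τ : E}

theorem inner_eq_zero_of_add_notMem (hR : IsRootClosed R) (hα : α ∈ R)
    (h : IsLargestMultiple R α N) (hN : 4 ≤ N) (hw : ⟪α, w⟫ = 0) (hτ : τ ∈ R)
    (hτw : 0 < ⟪τ, w⟫) (hτmax : ∀ x ∈ R, ⟪x, w⟫ ≤ ⟪τ, w⟫) (hτα : τ + α ∉ R) :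
    ⟪τ, α⟫ = 0 := by
  rcases lt_trichotomy ⟪τ, α⟫ 0 with hneg | hzero | hpos
  · exact absurd (hR.add_mem hτ hα hneg) hτα
  · exact hzero
  exfalso
  have ha : 0 ≤ ⟪α, α⟫ := real_inner_self_nonneg
  have hNR : (4 : ℝ) ≤ N := by exact_mod_cast hN
  have hNa := hR.nat_mul_inner_self_le hα hτ hpos hτα h.1
  -- `2τ - (N + i)α` would exceed the maximum of `⟪·, w⟫`
  have hstring : ∀ i : ℕ, 0 < i → i ≤ 2 → ⟪τ, τ⟫ = ((N : ℝ) + i) * ⟪τ, α⟫ := by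
    intro i hi hi2
    have hiR : (i : ℝ) ≤ 2 := by exact_mod_cast hi2
    have hmem := hR.sub_add_smul_mem hα hτ (by linarith) h.1 (i := i) (by nlinarith)
    refine (h.inner_self_eq_or_two_smul_sub_mem hR hτ hi hmem).resolve_right fun h2 => ?_
    have := hτmax _ h2
    simp only [inner_sub_left, real_inner_smul_left, hw, mul_zero, sub_zero] at this
    linarith
  have h₁ := hstring 1 one_pos one_le_two
  have h₂ := hstring 2 two_pos le_rfl
  push_cast at h₁ h₂
  linarith

theorem inner_nonpos_of_forall_inner_le (hR : IsRootClosed R) (hfin : R.Finite) (hα : α ∈ R)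
    (h : IsLargestMultiple R α N) (hN : 4 ≤ N) (hw : ⟪α, w⟫ = 0) {γ : E} (hγ : γ ∈ R)
    (hγw : 0 < ⟪γ, w⟫) (hγmax : ∀ x ∈ R, ⟪x, w⟫ ≤ ⟪γ, w⟫) : ⟪γ, α⟫ ≤ 0 := by
  obtain ⟨τ, ⟨hτ, hτw⟩, hτmax⟩ := Set.exists_max_image {x ∈ R | ⟪x, w⟫ = ⟪γ, w⟫}
    (⟪·, α⟫) (hfin.subset fun _ hx => hx.1) ⟨γ, hγ, rfl⟩
  have hτα : τ + α ∉ R := fun hmem => by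
    have := hτmax _ ⟨hmem, by rw [inner_add_left, hw, add_zero, hτw]⟩
    rw [inner_add_left] at this
    linarith [real_inner_self_pos.mpr h.ne_zero]
  have := h.inner_eq_zero_of_add_notMem hR hα hN hw hτ (hτw ▸ hγw) (hτw ▸ hγmax) hτα
  linarith [hτmax γ ⟨hγ, rfl⟩]

theorem inner_eq_zero_of_forall_inner_le (hR : IsRootClosed R) (hfin : R.Finite) (hα : α ∈ R)
    (h : IsLargestMultiple R α N) (hN : 4 ≤ N) (hw : ⟪α, w⟫ = 0) {γ : E} (hγ : γ ∈ R)
    (hγw : 0 < ⟪γ, w⟫) (hγmax : ∀ x ∈ R, ⟪x, w⟫ ≤ ⟪γ, w⟫) : ⟪γ, α⟫ = 0 := by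
  have h₁ := h.inner_nonpos_of_forall_inner_le hR hfin hα hN hw hγ hγw hγmax
  have h₂ := (h.neg hR).inner_nonpos_of_forall_inner_le hR hfin (hR.neg_mem hα) hN
    (by rw [inner_neg_left, hw, neg_zero]) hγ hγw hγmax
  rw [inner_neg_right] at h₂
  linarith

theorem inner_le_two_mul_inner (hR : IsRootClosed R) (h : IsLargestMultiple R α N) {β : E}
    (hβ : β ∈ R) (hc : 0 < ⟪β, α⟫) (hstring : ∀ i : ℕ, i ≤ 2 → β - ((N : ℝ) + i) • α ∈ R)
    (hw : ⟪α, w⟫ = 0) (hτ : τ ∈ R) (hτmax : ∀ x ∈ R, ⟪x, w⟫ ≤ ⟪τ, w⟫) (hτα : ⟪τ, α⟫ = 0)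
    (hτβ : ⟪τ, β⟫ = ⟪τ, w⟫) (hτw : 0 < ⟪τ, w⟫) : ⟪τ, w⟫ ≤ 2 * ⟪β, w⟫ := by
  have hτβ' : ∀ s : ℝ, 0 < ⟪τ, β - s • α⟫ := fun s => by
    rwa [inner_sub_right, real_inner_smul_right, hτα, mul_zero, sub_zero, hτβ]
  have hx : τ - β ∈ R := by simpa using hR.sub_mem hτ hβ (by simpa using hτβ' 0)
  have hxα : ⟪τ - β, -α⟫ = ⟪β, α⟫ := by
    rw [inner_neg_right, inner_sub_left, hτα]
    ring
  -- `2(τ - β) + (N + i)α` is a root unless `τ - β` is orthogonal to `τ - β + (N + i)α`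
  have hpair : ∀ i : ℕ, 0 < i → i ≤ 2 →
      ⟪τ - β, τ - β⟫ = ((N : ℝ) + i) * ⟪β, α⟫ ∨ ⟪τ, w⟫ ≤ 2 * ⟪β, w⟫ := by
    intro i hi hi2
    have hxi : τ - β - ((N : ℝ) + i) • -α ∈ R := by
      convert hR.sub_mem hτ (hstring i hi2) (hτβ' _) using 1
      module
    rcases (h.neg hR).inner_self_eq_or_two_smul_sub_mem hR hx hi hxi with h0 | hmem
    · exact .inl (hxα ▸ h0)
    · have := hτmax _ hmem
      simp only [inner_sub_left, real_inner_smul_left, inner_neg_left, hw, neg_zero, mul_zero,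
        sub_zero] at this
      exact .inr (by linarith)
  rcases hpair 1 one_pos one_le_two with h₁ | h₁
  · rcases hpair 2 two_pos le_rfl with h₂ | h₂
    · push_cast at h₁ h₂
      linarith
    · exact h₂
  · exact h₁

theorem add_mem_of_inner_pos (hR : IsRootClosed R) (hfin : R.Finite) (hα : α ∈ R)
    (h : IsLargestMultiple R α N) (hN : 5 ≤ N) {β : E} (hβ : β ∈ R) (hβα : β ∉ ℝ ∙ α)
    (hc : 0 < ⟪β, α⟫) : β + α ∈ R := by
  by_contra hadd
  have ha : 0 < ⟪α, α⟫ := real_inner_self_pos.mpr h.ne_zero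
  have hNR : (5 : ℝ) ≤ N := by exact_mod_cast hN
  have hNa := hR.nat_mul_inner_self_le hα hβ hc hadd h.1
  have hstring : ∀ i : ℕ, i ≤ 3 → β - ((N : ℝ) + i) • α ∈ R := fun i hi => by
    have hiR : (i : ℝ) ≤ 3 := by exact_mod_cast hi
    exact hR.sub_add_smul_mem hα hβ (by linarith) h.1
      (by nlinarith [mul_le_mul_of_nonneg_right hiR ha.le, mul_le_mul_of_nonneg_right hNR ha.le])
  obtain ⟨w, s, hβws, hw, hβw⟩ := exists_add_smul_inner_eq_zero_of_notMem_span hβα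
  obtain ⟨τ, hτ, hτmax⟩ := Set.exists_max_image R (⟪·, w⟫) hfin ⟨β, hβ⟩
  have hτw : 0 < ⟪τ, w⟫ := hβw.trans_le (hτmax β hβ)
  have hperp : ∀ γ ∈ R, ⟪τ, w⟫ ≤ ⟪γ, w⟫ → ⟪γ, α⟫ = 0 := fun γ hγ hγτ =>
    h.inner_eq_zero_of_forall_inner_le hR hfin hα (by omega) hw hγ (hτw.trans_le hγτ)
      fun x hx => (hτmax x hx).trans hγτ
  have hτα := hperp τ hτ le_rfl
  have hτβ : ⟪τ, β⟫ = ⟪τ, w⟫ := by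
    rw [hβws, inner_add_right, real_inner_smul_right, hτα, mul_zero, add_zero]
  have hM := h.inner_le_two_mul_inner hR hβ hc (fun i hi => hstring i (by omega)) hw hτ hτmax
    hτα hτβ hτw
  -- a root `2β - (N + i)α` maximizes `⟪·, w⟫`, hence is orthogonal to `α`
  have hpair : ∀ i : ℕ, 0 < i → i ≤ 3 →
      ⟪β, β⟫ = ((N : ℝ) + i) * ⟪β, α⟫ ∨ 2 * ⟪β, α⟫ = ((N : ℝ) + i) * ⟪α, α⟫ := by
    intro i hi hi3
    refine (h.inner_self_eq_or_two_smul_sub_mem hR hβ hi (hstring i hi3)).imp_right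
      fun hmem => ?_
    have hψ : ⟪(2 : ℝ) • β - ((N : ℝ) + i) • α, w⟫ = 2 * ⟪β, w⟫ := by
      rw [inner_sub_left, real_inner_smul_left, real_inner_smul_left, hw, mul_zero, sub_zero]
    have := hperp _ hmem (by rw [hψ]; exact hM)
    rw [inner_sub_left, real_inner_smul_left, real_inner_smul_left] at this
    linarith
  have h₁ := hpair 1 one_pos (by norm_num)
  have h₂ := hpair 2 two_pos (by norm_num)
  have h₃ := hpair 3 three_pos le_rfl
  push_cast at h₁ h₂ h₃
  -- of three consecutive values of `i`, two satisfy the same disjunct, which is linear in `i`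
  rcases h₁ with h₁ | h₁ <;> rcases h₂ with h₂ | h₂ <;> rcases h₃ with h₃ | h₃ <;> linarith

end IsLargestMultiple

end RootClosed

/-- In an irreducible GRS of rank at least 2, `5α` is never a root for
nonzero `α ∈ R`. -/
theorem stmt16 (R : Set V) (hR : IsGRS R) (hirr : IsIrreducibleGRS R)
    (hdim : 2 ≤ Module.finrank ℝ V) :
    ∀ α ∈ R, α ≠ 0 → (5 : ℝ) • α ∉ R := by
  intro α hα hα0 h5
  obtain ⟨-, hfin, hspan, hRc⟩ := hR
  change IsRootClosed R at hRc
  obtain ⟨N, hN, hNα⟩ := exists_isLargestMultiple hfin hα0 (n := 5) (by exact_mod_cast h5)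
  obtain ⟨β', hβ', hβ'α, hβ'c⟩ := hRc.exists_mem_notMem_span_inner_pos hspan hirr hdim hα hα0
  obtain ⟨β, ⟨hβ, hβα⟩, hβmax⟩ := Set.exists_max_image {β ∈ R | β ∉ ℝ ∙ α} (⟪·, α⟫)
    (hfin.subset fun _ hx => hx.1) ⟨β', hβ', hβ'α⟩
  have hc : 0 < ⟪β, α⟫ := hβ'c.trans_le (hβmax β' ⟨hβ', hβ'α⟩)
  have hadd := hNα.add_mem_of_inner_pos hRc hfin hα hN hβ hβα hc
  have := hβmax _ ⟨hadd, fun hmem => hβα (by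
    simpa using Submodule.sub_mem _ hmem (Submodule.mem_span_singleton_self α))⟩
  rw [inner_add_left] at this
  linarith [real_inner_self_pos.mpr hα0]
end

section
/- Let (R,V) be an irreducible generalized root system with dim V = 2, and suppose there is a primitive root x ∈ R with x, 2x, 3x, 4x ∈ R. Then there exists y ∈ V with ⟨x,y⟩ = 0 and ‖y‖² = 6‖x‖² such that R = {0, ±x, ±2x, ±3x, ±4x, ±y, ±y ± x, ±y ± 2x, ±y ± 3x, ±2y}. -/
open scoped RealInnerProductSpace

variable {V : Type*} [NormedAddCommGroup V] [InnerProductSpace ℝ V] [FiniteDimensional ℝ V]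

/-! Write vectors as `t • x + μ • q` with `q` a unit vector orthogonal to `x`: `R` becomes a finite
set of pairs `(t, μ)` on which the GRS axioms only involve `t s ‖x‖² + μ ν`, and the level `μ` is
`{t | (t, μ) ∈ R}`. Subtracting `x` moves the points of a level towards `0`, and primitivity makes
the level `0` the set of integers in `[-N, N]`, `N ≥ 4`. A level with a positive point thus has
points `≥ N - 1` and `≤ 1 - N`; adding them, or subtracting the successor of the second from the
first, shows that a level `μ` is `{0}` as soon as `2 μ` is not a level. Hence the top level `C` is
`{0}`, and a level `ν > 0` with a nonzero point has `2 ν ≤ C` and `2 (C - ν) ≤ C` (the level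
`C - ν` has a nonzero point too), i.e. `ν = C / 2 =: d`; irreducibility provides such a level.
Pairing the top point `u` of the level `d` with `1 - u` gives `d² = u (u - 1) ‖x‖²`, and with
`2 - u` gives `2 u - 2 ≤ N ≤ u + 1`; hence `u = 3`, `N = 4` and `d² = 6 ‖x‖²`. -/

/-- The GRS axioms for the pairs `(t, μ)` with `t • x + μ • q ∈ R`, where `⟪x, q⟫ = 0`,
`‖q‖ = 1` and `a = ‖x‖²`. -/
structure IsPlanarGRS (a : ℝ) (M : ℝ → ℝ → Prop) : Prop where
  pos : 0 < a
  finite : {p : ℝ × ℝ | M p.1 p.2}.Finite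
  sub_mem {t μ s ν : ℝ} : M t μ → M s ν → 0 < t * s * a + μ * ν → M (t - s) (μ - ν)
  add_mem_iff {t μ s ν : ℝ} : M t μ → M s ν → t * s * a + μ * ν = 0 →
    (M (t + s) (μ + ν) ↔ M (t - s) (μ - ν))

def rootCoeffs : Set (ℤ × ℤ) :=
  {p | (p.2 = 0 ∧ |p.1| ≤ 4) ∨ (|p.2| = 1 ∧ |p.1| ≤ 3) ∨ (|p.2| = 2 ∧ p.1 = 0)}

theorem neg_mem_rootCoeffs {p : ℤ × ℤ} : -p ∈ rootCoeffs ↔ p ∈ rootCoeffs := by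
  simp [rootCoeffs]

namespace IsPlanarGRS

variable {a : ℝ} {M : ℝ → ℝ → Prop} {t μ s ν : ℝ}

theorem zero_mem (hM : IsPlanarGRS a M) (h1 : M 1 0) : M 0 0 := by
  simpa using hM.sub_mem h1 h1 (by simpa using hM.pos)

theorem neg_mem (hM : IsPlanarGRS a M) (h1 : M 1 0) (h : M t μ) : M (-t) (-μ) := by
  simpa using (hM.add_mem_iff (hM.zero_mem h1) h (by ring)).1 (by simpa using h)

theorem neg_mem_iff (hM : IsPlanarGRS a M) (h1 : M 1 0) : M (-t) (-μ) ↔ M t μ :=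
  ⟨fun h => by simpa using hM.neg_mem h1 h, hM.neg_mem h1⟩

theorem neg_mem_line (hM : IsPlanarGRS a M) (h1 : M 1 0) (h : M t 0) : M (-t) 0 := by
  simpa using hM.neg_mem h1 h

theorem add_mem (hM : IsPlanarGRS a M) (h1 : M 1 0) (ht : M t μ) (hs : M s ν)
    (hneg : t * s * a + μ * ν < 0) : M (t + s) (μ + ν) := by
  simpa using hM.sub_mem ht (hM.neg_mem h1 hs) (by linarith)

theorem sub_mem_of_line (hM : IsPlanarGRS a M) (ht : M t μ) (hs : M s 0) (hts : 0 < t * s) :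
    M (t - s) μ := by
  simpa using hM.sub_mem ht hs (by nlinarith [hM.pos])

theorem sub_nat_mul_mem (hM : IsPlanarGRS a M) (hs : M s 0) (hs0 : 0 < s) (ht : M t μ) :
    ∀ k : ℕ, k * s < t + s → M (t - k * s) μ
  | 0, _ => by simpa using ht
  | k + 1, hk => by
    have hk' : (k : ℝ) * s < t := by push_cast at hk; linarith
    convert hM.sub_mem_of_line (sub_nat_mul_mem hM hs hs0 ht k (by linarith)) hs
      (mul_pos (by linarith) hs0) using 1
    push_cast
    ring

theorem exists_mem_Ioc (hM : IsPlanarGRS a M) (hs : M s 0) (hs0 : 0 < s) (ht : M t μ)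
    (ht0 : 0 < t) : ∃ r ∈ Set.Ioc 0 s, M r μ ∧ ∃ k : ℕ, t = k * s + r := by
  have hts : 0 < t / s := div_pos ht0 hs0
  obtain ⟨k, hk⟩ := Nat.exists_eq_succ_of_ne_zero (Nat.ceil_pos.2 hts).ne'
  have hlt : (⌈t / s⌉₊ : ℝ) < t / s + 1 := Nat.ceil_lt_add_one hts.le
  have hle : t / s ≤ ⌈t / s⌉₊ := Nat.le_ceil _
  rw [hk, Nat.cast_succ, add_lt_add_iff_right, lt_div_iff₀ hs0] at hlt
  rw [hk, Nat.cast_succ, div_le_iff₀ hs0] at hle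
  exact ⟨t - k * s, ⟨by linarith, by linarith⟩, hM.sub_nat_mul_mem hs hs0 ht k (by linarith),
    k, by ring⟩

theorem finite_level (hM : IsPlanarGRS a M) (μ : ℝ) : {t | M t μ}.Finite :=
  hM.finite.preimage (Prod.mk_left_injective μ).injOn

theorem finite_levels (hM : IsPlanarGRS a M) : {μ | ∃ t, M t μ}.Finite :=
  (hM.finite.image Prod.snd).subset fun μ ⟨t, ht⟩ => ⟨(t, μ), ht, rfl⟩

theorem exists_int_eq_of_mem_line (hM : IsPlanarGRS a M) (h1 : M 1 0)
    (hprim : ∀ n : ℕ, 0 < n → M (n : ℝ)⁻¹ 0 → n = 1) (ht : M t 0) : ∃ k : ℤ, t = k := by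
  have hfin : {t | M t 0 ∧ 0 < t}.Finite := (hM.finite_level 0).subset fun _ h => h.1
  obtain ⟨m, ⟨hm, hm0⟩, hmin⟩ := hfin.isCompact.exists_isLeast ⟨1, h1, one_pos⟩
  have hmul : ∀ t, M t 0 → 0 < t → ∃ n : ℕ, t = n * m := fun t ht ht0 => by
    obtain ⟨r, ⟨hr0, hrm⟩, hr, k, rfl⟩ := hM.exists_mem_Ioc hm hm0 ht ht0
    obtain rfl : r = m := le_antisymm hrm (hmin ⟨hr, hr0⟩)
    exact ⟨k + 1, by push_cast; ring⟩
  obtain ⟨n, hn⟩ := hmul 1 h1 one_pos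
  have hn0 : 0 < n := Nat.pos_of_ne_zero (by rintro rfl; simp at hn)
  have hmn : m = (n : ℝ)⁻¹ := eq_inv_of_mul_eq_one_left (by rw [mul_comm]; exact hn.symm)
  obtain rfl : m = 1 := by simpa [hprim n hn0 (hmn ▸ hm)] using hmn
  rcases lt_trichotomy t 0 with hneg | rfl | hpos
  · obtain ⟨n, hn⟩ := hmul (-t) (hM.neg_mem_line h1 ht) (by linarith)
    exact ⟨-n, by push_cast; linarith⟩
  · exact ⟨0, by simp⟩
  · obtain ⟨n, hn⟩ := hmul t ht hpos
    exact ⟨n, by simp [hn]⟩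

theorem exists_mem_ge_and_exists_mem_le (hM : IsPlanarGRS a M) (h1 : M 1 0) {N : ℝ}
    (hN : M N 0) (hN0 : 0 < N) (ht : M t μ) (ht0 : 0 < t) :
    (∃ s, M s μ ∧ N - 1 ≤ s) ∧ ∃ s, M s μ ∧ s ≤ 1 - N := by
  obtain ⟨r, ⟨hr0, hr1⟩, hr, -⟩ := hM.exists_mem_Ioc h1 one_pos ht ht0
  refine ⟨?_, r - N, hM.sub_mem_of_line hr hN (by positivity), by linarith⟩
  obtain ⟨s, hs, hs1, hs0⟩ : ∃ s, M s μ ∧ -1 ≤ s ∧ s < 0 := by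
    rcases hr1.lt_or_eq with hlt | rfl
    · exact ⟨r - 1, hM.sub_mem_of_line hr h1 (by linarith), by linarith, by linarith⟩
    · have h0 : M 0 μ := by simpa using hM.sub_mem_of_line hr h1 (by norm_num)
      exact ⟨-1, by simpa using (hM.add_mem_iff h0 h1 (by ring)).1 (by simpa using hr),
        le_rfl, by norm_num⟩
  exact ⟨s + N, by simpa using hM.sub_mem_of_line hs (hM.neg_mem_line h1 hN) (by nlinarith),
    by linarith⟩

section Levels

variable {N C d : ℝ}

theorem eq_zero_of_forall_not_two_mul (hM : IsPlanarGRS a M) (h1 : M 1 0)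
    (hN : IsGreatest {t | M t 0} N) (hN3 : 3 < N) (h2μ : ∀ s, ¬ M s (2 * μ)) (ht : M t μ) :
    t = 0 := by
  wlog ht0 : 0 < t generalizing t μ
  · rcases (not_lt.1 ht0).lt_or_eq with hneg | h0
    · refine neg_eq_zero.1 (this (μ := -μ) (fun s hs => h2μ (-s) ?_) (hM.neg_mem h1 ht)
        (by linarith))
      simpa using hM.neg_mem h1 hs
    · exact h0
  obtain ⟨⟨s, hs, hsN⟩, s', hs', hs'N⟩ :=
    hM.exists_mem_ge_and_exists_mem_le h1 hN.1 (by linarith) ht ht0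
  have hs'1 : M (s' + 1) μ := by
    simpa using hM.sub_mem_of_line hs' (hM.neg_mem_line h1 h1) (by nlinarith)
  rcases lt_or_ge (s * s' * a + μ * μ) 0 with hlt | hge
  · exact (h2μ _ (by simpa [two_mul] using hM.add_mem h1 hs hs' hlt)).elim
  · have := hN.2 (by simpa using hM.sub_mem hs hs'1 (by nlinarith [hM.pos]))
    linarith

theorem eq_zero_of_mem_top (hM : IsPlanarGRS a M) (h1 : M 1 0) (hN : IsGreatest {t | M t 0} N)
    (hN3 : 3 < N) (hC : IsGreatest {μ | ∃ t, M t μ} C) (hC0 : 0 < C) (ht : M t C) : t = 0 :=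
  hM.eq_zero_of_forall_not_two_mul h1 hN hN3 (fun s hs => by linarith [hC.2 ⟨s, hs⟩]) ht

theorem zero_mem_top (hM : IsPlanarGRS a M) (h1 : M 1 0) (hN : IsGreatest {t | M t 0} N)
    (hN3 : 3 < N) (hC : IsGreatest {μ | ∃ t, M t μ} C) (hC0 : 0 < C) : M 0 C := by
  obtain ⟨t, ht⟩ := hC.1
  rwa [hM.eq_zero_of_mem_top h1 hN hN3 hC hC0 ht] at ht

theorem two_mul_eq_of_mem (hM : IsPlanarGRS a M) (h1 : M 1 0) (hN : IsGreatest {t | M t 0} N)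
    (hN3 : 3 < N) (hC : IsGreatest {μ | ∃ t, M t μ} C) (hC0 : 0 < C) (hν : 0 < ν)
    (ht : M t ν) (ht0 : t ≠ 0) : 2 * ν = C := by
  have hle : ∀ {μ s}, M s μ → s ≠ 0 → 2 * μ ≤ C := fun hs hs0 => by
    by_contra h
    exact hs0 (hM.eq_zero_of_forall_not_two_mul h1 hN hN3 (fun s' hs' => h (hC.2 ⟨s', hs'⟩)) hs)
  have hcomp : M (-t) (C - ν) := by
    simpa using hM.sub_mem (hM.zero_mem_top h1 hN hN3 hC hC0) ht (by nlinarith)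
  linarith [hle ht ht0, hle hcomp (neg_ne_zero.2 ht0)]

theorem exists_isGreatest_levels (hM : IsPlanarGRS a M) (h1 : M 1 0)
    (hN : IsGreatest {t | M t 0} N) (hN3 : 3 < N) (ht : M t ν) (ht0 : t ≠ 0) (hν0 : ν ≠ 0) :
    ∃ d t, 0 < d ∧ IsGreatest {μ | ∃ t, M t μ} (2 * d) ∧ M t d ∧ t ≠ 0 := by
  wlog hν : 0 < ν generalizing t ν
  · exact this (hM.neg_mem h1 ht) (neg_ne_zero.2 ht0) (neg_ne_zero.2 hν0)
      (by linarith [(not_lt.1 hν).lt_of_ne hν0])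
  obtain ⟨C, hC⟩ := hM.finite_levels.isCompact.exists_isGreatest ⟨ν, t, ht⟩
  have hC0 : 0 < C := hν.trans_le (hC.2 ⟨t, ht⟩)
  exact ⟨ν, t, hν, hM.two_mul_eq_of_mem h1 hN hN3 hC hC0 hν ht ht0 ▸ hC, ht, ht0⟩

theorem eq_or_eq_of_mem_levels (hM : IsPlanarGRS a M) (h1 : M 1 0)
    (hN : IsGreatest {t | M t 0} N) (hN3 : 3 < N) (hC : IsGreatest {μ | ∃ t, M t μ} (2 * d))
    (hd : 0 < d) {t₀ : ℝ} (ht₀ : M t₀ d) (ht₀0 : t₀ ≠ 0) (hν : 0 < ν) (ht : M t ν) :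
    ν = d ∨ ν = 2 * d := by
  have half : ∀ {μ s}, 0 < μ → M s μ → s ≠ 0 → μ = d := fun hμ hs hs0 => by
    linarith [hM.two_mul_eq_of_mem h1 hN hN3 hC (by positivity) hμ hs hs0]
  by_cases hne : ∃ s, M s ν ∧ s ≠ 0
  · obtain ⟨s, hs, hs0⟩ := hne
    exact Or.inl (half hν hs hs0)
  push Not at hne
  rcases (hC.2 ⟨t, ht⟩).lt_or_eq with hlt | heq
  · have h0 : M 0 ν := hne t ht ▸ ht
    have hdiff : M t₀ (d - ν) := by simpa using hM.sub_mem ht₀ h0 (by nlinarith)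
    rcases lt_trichotomy (d - ν) 0 with hneg | hzero | hpos
    · have := half (μ := ν - d) (by linarith) (by simpa using hM.neg_mem h1 hdiff)
        (neg_ne_zero.2 ht₀0)
      linarith
    · exact Or.inl (by linarith)
    · linarith [half hpos hdiff ht₀0]
  · exact Or.inr heq

theorem neg_mem_half (hM : IsPlanarGRS a M) (h1 : M 1 0) (hN : IsGreatest {t | M t 0} N)
    (hN3 : 3 < N) (hC : IsGreatest {μ | ∃ t, M t μ} (2 * d)) (hd : 0 < d) (ht : M t d) :
    M (-t) d := by
  convert hM.sub_mem (hM.zero_mem_top h1 hN hN3 hC (by positivity)) ht (by nlinarith)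
    using 1 <;> ring

theorem half_level_eq (hM : IsPlanarGRS a M) (h1 : M 1 0) (hN : IsGreatest {t | M t 0} N)
    (hN4 : 4 ≤ N) (hC : IsGreatest {μ | ∃ t, M t μ} (2 * d)) (hd : 0 < d) {t₀ : ℝ}
    (ht₀ : M t₀ d) (ht₀0 : t₀ ≠ 0) :
    N = 4 ∧ IsGreatest {t | M t d} 3 ∧ d * d = 6 * a := by
  have hN3 : 3 < N := by linarith
  have hsymm : ∀ {t}, M t d → M (-t) d := hM.neg_mem_half h1 hN hN3 hC hd
  obtain ⟨u, hu⟩ := (hM.finite_level d).isCompact.exists_isGreatest ⟨t₀, ht₀⟩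
  have hu0 : 0 < u := by
    rcases ht₀0.lt_or_gt with h | h
    · linarith [hu.2 (hsymm ht₀)]
    · linarith [hu.2 ht₀]
  have huN : N - 1 ≤ u := by
    obtain ⟨s, hs, hsN⟩ := (hM.exists_mem_ge_and_exists_mem_le h1 hN.1 (by linarith) hu.1 hu0).1
    linarith [hu.2 hs]
  have hu1 : M (u - 1) d := hM.sub_mem_of_line hu.1 h1 (by linarith)
  have h1u : M (1 - u) d := by simpa using hsymm hu1
  have h2u : M (2 - u) d := by
    convert hsymm (hM.sub_mem_of_line hu1 h1 (by linarith)) using 1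
    ring
  have hdd : d * d = u * (u - 1) * a := by
    rcases lt_trichotomy (u * (1 - u) * a + d * d) 0 with hlt | heq | hgt
    · have h1top : M 1 (2 * d) := by convert hM.add_mem h1 hu.1 h1u hlt using 1 <;> ring
      simpa using hM.eq_zero_of_mem_top h1 hN hN3 hC (by positivity) h1top
    · linarith
    · linarith [hN.2 (by simpa using hM.sub_mem hu.1 h1u hgt)]
  have h22 : u - (2 - u) ≤ N := hN.2 (by simpa using hM.sub_mem hu.1 h2u (by nlinarith [hM.pos]))
  obtain ⟨rfl, rfl⟩ : u = 3 ∧ N = 4 := ⟨by linarith, by linarith⟩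
  exact ⟨rfl, hu, by rw [hdd]; ring⟩

end Levels

theorem mem_iff_exists_int (hM : IsPlanarGRS a M) (h1 : M 1 0)
    (hint : ∀ t, M t 0 → ∃ k : ℤ, t = k) {n : ℕ} (hn : IsGreatest {t | M t μ} n)
    (hsymm : ∀ {t}, M t μ → M (-t) μ) : M t μ ↔ ∃ k : ℤ, |k| ≤ n ∧ t = k := by
  constructor
  · intro ht
    have hnonneg : ∀ {s}, M s μ → 0 ≤ s → ∃ k : ℤ, s = k := fun {s} hs hs0 => by
      rcases hs0.lt_or_eq with hpos | rfl
      · have hpos' : 0 < n * s * a := mul_pos (mul_pos (by linarith [hn.2 hs]) hpos) hM.pos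
        obtain ⟨k, hk⟩ := hint _ (by simpa using hM.sub_mem hn.1 hs (by nlinarith))
        exact ⟨n - k, by push_cast; linarith⟩
      · exact ⟨0, by simp⟩
    obtain ⟨k, rfl⟩ : ∃ k : ℤ, t = k := by
      rcases le_total 0 t with h | h
      · exact hnonneg ht h
      · obtain ⟨k, hk⟩ := hnonneg (hsymm ht) (by linarith)
        exact ⟨-k, by push_cast; linarith⟩
    have : |(k : ℝ)| ≤ n := abs_le.2 ⟨by linarith [hn.2 (hsymm ht)], hn.2 ht⟩
    exact ⟨k, by exact_mod_cast this, rfl⟩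
  · rintro ⟨k, hk, rfl⟩
    wlog hk0 : 0 ≤ k generalizing k
    · simpa using hsymm (this (-k) (by rwa [abs_neg]) (by omega))
    lift k to ℕ using hk0
    have hkn : k ≤ n := by simpa using hk
    convert hM.sub_nat_mul_mem h1 one_pos hn.1 (n - k) (by push_cast [hkn]; linarith) using 1
    push_cast [hkn]
    ring

theorem mem_iff_rootCoeffs_of_nonneg {d : ℝ} (hd : 0 < d)
    (hline : ∀ t, M t 0 ↔ ∃ k : ℤ, |k| ≤ 4 ∧ t = k)
    (hhalf : ∀ t, M t d ↔ ∃ k : ℤ, |k| ≤ 3 ∧ t = k) (htop : ∀ t, M t (2 * d) ↔ t = 0)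
    (hlevels : ∀ {t μ}, 0 < μ → M t μ → μ = d ∨ μ = 2 * d) (hμ : 0 ≤ μ) :
    M t μ ↔ ∃ p ∈ rootCoeffs, t = p.1 ∧ μ = p.2 * d := by
  constructor
  · intro h
    rcases hμ.lt_or_eq with hμ | rfl
    · rcases hlevels hμ h with rfl | rfl
      · obtain ⟨k, hk, rfl⟩ := (hhalf t).1 h
        exact ⟨(k, 1), Or.inr (Or.inl ⟨rfl, hk⟩), rfl, by simp⟩
      · exact ⟨(0, 2), Or.inr (Or.inr ⟨rfl, rfl⟩), by simpa using (htop t).1 h, by simp⟩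
    · obtain ⟨k, hk, rfl⟩ := (hline t).1 h
      exact ⟨(k, 0), Or.inl ⟨rfl, hk⟩, rfl, by simp⟩
  · rintro ⟨⟨k, j⟩, hp, rfl, rfl⟩
    have hj : 0 ≤ j := by
      have : (0 : ℝ) ≤ j := nonneg_of_mul_nonneg_left hμ hd
      exact_mod_cast this
    rcases hp with ⟨rfl, hk⟩ | ⟨hj1, hk⟩ | ⟨hj2, rfl⟩
    · simpa using (hline k).2 ⟨k, hk, rfl⟩
    · obtain rfl : j = 1 := by rwa [abs_of_nonneg hj] at hj1
      simpa using (hhalf k).2 ⟨k, hk, rfl⟩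
    · obtain rfl : j = 2 := by rwa [abs_of_nonneg hj] at hj2
      simpa using (htop 0).2 rfl

theorem mem_iff_rootCoeffs (hM : IsPlanarGRS a M) (h1 : M 1 0) {d : ℝ}
    (h : ∀ {t μ}, 0 ≤ μ → (M t μ ↔ ∃ p ∈ rootCoeffs, t = p.1 ∧ μ = p.2 * d)) :
    M t μ ↔ ∃ p ∈ rootCoeffs, t = p.1 ∧ μ = p.2 * d := by
  rcases le_total 0 μ with hμ | hμ
  · exact h hμ
  rw [← hM.neg_mem_iff h1, h (by linarith)]
  constructor <;> rintro ⟨p, hp, ht, hμ⟩ <;>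
    exact ⟨-p, neg_mem_rootCoeffs.2 hp, by simp; linarith, by simp; linarith⟩

theorem exists_mem_iff_rootCoeffs (hM : IsPlanarGRS a M) (h1 : M 1 0) (h4 : M 4 0)
    (hprim : ∀ n : ℕ, 0 < n → M (n : ℝ)⁻¹ 0 → n = 1) (ht : M t ν) (ht0 : t ≠ 0)
    (hν0 : ν ≠ 0) :
    ∃ d, 0 < d ∧ d * d = 6 * a ∧ ∀ t μ, M t μ ↔ ∃ p ∈ rootCoeffs, t = p.1 ∧ μ = p.2 * d := by
  have hint : ∀ t, M t 0 → ∃ k : ℤ, t = k := fun t => hM.exists_int_eq_of_mem_line h1 hprim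
  obtain ⟨N, hN⟩ := (hM.finite_level 0).isCompact.exists_isGreatest ⟨1, h1⟩
  obtain ⟨d, t₀, hd, hC, ht₀, ht₀0⟩ :=
    hM.exists_isGreatest_levels h1 hN (by linarith [hN.2 h4]) ht ht0 hν0
  obtain ⟨rfl, h3, hd6⟩ := hM.half_level_eq h1 hN (hN.2 h4) hC hd ht₀ ht₀0
  have hC0 : 0 < 2 * d := by positivity
  refine ⟨d, hd, hd6, fun t μ => hM.mem_iff_rootCoeffs h1 fun hμ =>
    mem_iff_rootCoeffs_of_nonneg hd (fun t => ?_) (fun t => ?_) (fun t => ?_)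
      (hM.eq_or_eq_of_mem_levels h1 hN (by norm_num) hC hd ht₀ ht₀0) hμ⟩
  · exact hM.mem_iff_exists_int h1 hint (n := 4) (by exact_mod_cast hN) (hM.neg_mem_line h1)
  · exact hM.mem_iff_exists_int h1 hint (n := 3) (by exact_mod_cast h3)
      (hM.neg_mem_half h1 hN (by norm_num) hC hd)
  · exact ⟨hM.eq_zero_of_mem_top h1 hN (by norm_num) hC hC0,
      by rintro rfl; exact hM.zero_mem_top h1 hN (by norm_num) hC hC0⟩

end IsPlanarGRS

section InnerProductSpace

variable {E : Type*} [NormedAddCommGroup E] [InnerProductSpace ℝ E] {x q : E}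

theorem inner_smul_add_smul_left (hxq : ⟪x, q⟫ = 0) (t μ : ℝ) :
    ⟪x, t • x + μ • q⟫ = t * ⟪x, x⟫ := by
  simp [inner_add_right, real_inner_smul_right, hxq]

theorem inner_smul_add_smul_right (hq : ⟪q, q⟫ = 1) (hxq : ⟪x, q⟫ = 0) (t μ : ℝ) :
    ⟪q, t • x + μ • q⟫ = μ := by
  rw [inner_add_right, real_inner_smul_right, real_inner_smul_right, real_inner_comm x q, hxq, hq]
  ring

theorem IsGRS.isPlanarGRS {R : Set E} (hR : IsGRS R) (hx : x ≠ 0) (hq : ⟪q, q⟫ = 1)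
    (hxq : ⟪x, q⟫ = 0) : IsPlanarGRS ⟪x, x⟫ fun t μ => t • x + μ • q ∈ R := by
  obtain ⟨-, hfin, -, hax⟩ := hR
  have hinner (t μ s ν : ℝ) : ⟪t • x + μ • q, s • x + ν • q⟫ = t * s * ⟪x, x⟫ + μ * ν := by
    rw [inner_add_left, real_inner_smul_left, real_inner_smul_left,
      inner_smul_add_smul_left hxq, inner_smul_add_smul_right hq hxq]
    ring
  have hinj : Function.Injective fun p : ℝ × ℝ => p.1 • x + p.2 • q := fun p p' h => by
    have h1 := congrArg (⟪x, ·⟫) h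
    have h2 := congrArg (⟪q, ·⟫) h
    simp only [inner_smul_add_smul_left hxq, inner_smul_add_smul_right hq hxq] at h1 h2
    exact Prod.ext (mul_right_cancel₀ (real_inner_self_pos.2 hx).ne' h1) h2
  refine ⟨real_inner_self_pos.2 hx, hfin.preimage hinj.injOn, fun ht hs h => ?_,
    fun ht hs h => ?_⟩
  · convert (hax _ ht _ hs).2.1 (by rwa [hinner]) using 2; module
  · convert (hax _ ht _ hs).2.2 (by rwa [hinner]) using 2 <;> module

theorem IsIrreducibleGRS.exists_inner_ne_zero_not_mem_span {R : Set E}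
    (hirr : IsIrreducibleGRS R) (hspan : Submodule.span ℝ R = ⊤) (hxR : x ∈ R) (hx : x ≠ 0)
    (hV : ℝ ∙ x ≠ ⊤) : ∃ v ∈ R, ⟪x, v⟫ ≠ 0 ∧ v ∉ ℝ ∙ x := by
  by_contra! h
  have horth : ∀ α ∈ {v ∈ R | v ∈ ℝ ∙ x}, ∀ β ∈ {v ∈ R | v ∉ ℝ ∙ x}, ⟪α, β⟫ = 0 := by
    rintro _ ⟨-, hα⟩ β ⟨hβR, hβ⟩
    obtain ⟨c, rfl⟩ := Submodule.mem_span_singleton.1 hα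
    rw [real_inner_smul_left]
    by_contra hne
    exact hβ (h β hβR (right_ne_zero_of_mul hne))
  rcases hirr _ _ (by ext v; by_cases v ∈ ℝ ∙ x <;> simp [*]) horth with h1 | h2
  · exact hx (h1 ⟨hxR, Submodule.mem_span_singleton_self x⟩)
  · refine hV (eq_top_iff.2 (hspan ▸ Submodule.span_le.2 fun v hv => ?_))
    by_contra hvx
    exact hvx ((h2 ⟨hv, hvx⟩ : v = 0) ▸ Submodule.zero_mem _)

theorem IsPrimitive.eq_one_of_inv_smul_mem {R : Set E} (hx : IsPrimitive R x) {n : ℕ}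
    (hn : 0 < n) (h : (n : ℝ)⁻¹ • x ∈ R) : n = 1 := by
  have := hx.2.2 n _ (by exact_mod_cast hn) h
    (by rw [smul_smul, Int.cast_natCast, mul_inv_cancel₀ (by positivity), one_smul])
  exact_mod_cast this

theorem eq_smul_add_smul_iff (hx : x ≠ 0) (hq : ⟪q, q⟫ = 1) (hxq : ⟪x, q⟫ = 0)
    (hdecomp : ∀ v : E, v = (⟪x, v⟫ / ⟪x, x⟫) • x + ⟪q, v⟫ • q) {v : E} {t μ : ℝ} :
    v = t • x + μ • q ↔ ⟪x, v⟫ / ⟪x, x⟫ = t ∧ ⟪q, v⟫ = μ := by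
  constructor
  · rintro rfl
    rw [inner_smul_add_smul_left hxq, inner_smul_add_smul_right hq hxq,
      mul_div_cancel_right₀ _ (real_inner_self_pos.2 hx).ne']
    exact ⟨rfl, rfl⟩
  · rintro ⟨rfl, rfl⟩
    exact hdecomp v

end InnerProductSpace

open Module in
theorem exists_unit_orthogonal_decomp (hdim : finrank ℝ V = 2) {x : V} (hx : x ≠ 0) :
    ∃ q : V, ⟪q, q⟫ = 1 ∧ ⟪x, q⟫ = 0 ∧ ∀ v : V, v = (⟪x, v⟫ / ⟪x, x⟫) • x + ⟪q, v⟫ • q := by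
  have hK : finrank ℝ (ℝ ∙ x)ᗮ = 1 := by
    have := (ℝ ∙ x).finrank_add_finrank_orthogonal
    rw [finrank_span_singleton hx, hdim] at this
    omega
  obtain ⟨q₀, hq₀K, hq₀⟩ := Submodule.exists_mem_ne_zero_of_ne_bot
    (p := (ℝ ∙ x)ᗮ) fun h => by rw [h, finrank_bot] at hK; simp at hK
  set q := ‖q₀‖⁻¹ • q₀
  have hq : ⟪q, q⟫ = 1 := by
    rw [real_inner_self_eq_norm_sq, norm_smul, norm_inv, norm_norm,
      inv_mul_cancel₀ (norm_ne_zero_iff.2 hq₀), one_pow]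
  have hqK : q ∈ (ℝ ∙ x)ᗮ := Submodule.smul_mem _ _ hq₀K
  have hspan : (ℝ ∙ x)ᗮ = ℝ ∙ q :=
    (Submodule.eq_of_le_of_finrank_eq ((Submodule.span_singleton_le_iff_mem _ _).2 hqK)
      (by rw [hK, finrank_span_singleton fun h => by simp [h] at hq])).symm
  have hxq := Submodule.mem_orthogonal_singleton_iff_inner_right.1 hqK
  refine ⟨q, hq, hxq, fun v => ?_⟩
  obtain ⟨w, hw, z, hz, rfl⟩ := (ℝ ∙ x).exists_add_mem_mem_orthogonal v
  obtain ⟨t, rfl⟩ := Submodule.mem_span_singleton.1 hw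
  obtain ⟨μ, rfl⟩ := Submodule.mem_span_singleton.1 (hspan ▸ hz)
  rw [inner_smul_add_smul_left hxq, inner_smul_add_smul_right hq hxq,
    mul_div_cancel_right₀ _ (real_inner_self_pos.2 hx).ne']

theorem setOf_rootCoeffs_eq {E : Type*} [AddCommGroup E] [Module ℝ E] (x y : E) :
    {v : E | ∃ p ∈ rootCoeffs, v = (p.1 : ℝ) • x + (p.2 : ℝ) • y} =
      {0, x, -x, (2 : ℝ) • x, -((2 : ℝ) • x), (3 : ℝ) • x, -((3 : ℝ) • x),
        (4 : ℝ) • x, -((4 : ℝ) • x), y, -y, (2 : ℝ) • y, -((2 : ℝ) • y),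
        y + x, y - x, -y + x, -y - x,
        y + (2 : ℝ) • x, y - (2 : ℝ) • x, -y + (2 : ℝ) • x, -y - (2 : ℝ) • x,
        y + (3 : ℝ) • x, y - (3 : ℝ) • x, -y + (3 : ℝ) • x, -y - (3 : ℝ) • x} := by
  ext v
  simp only [rootCoeffs, Set.mem_ofPred_eq, Set.mem_insert_iff, Set.mem_singleton_iff,
    Prod.exists]
  constructor
  · rintro ⟨k, j, ⟨rfl, hk⟩ | ⟨hj, hk⟩ | ⟨hj, rfl⟩, rfl⟩
    · obtain ⟨hk1, hk2⟩ := abs_le.1 hk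
      interval_cases k <;> norm_num
    · obtain ⟨hk1, hk2⟩ := abs_le.1 hk
      rcases abs_eq (zero_le_one' ℤ) |>.1 hj with rfl | rfl <;>
        interval_cases k <;> simp [sub_eq_add_neg, add_comm]
    · rcases abs_eq zero_le_two |>.1 hj with rfl | rfl <;> norm_num
  · rintro (rfl | rfl | rfl | rfl | rfl | rfl | rfl | rfl | rfl | rfl | rfl | rfl | rfl |
      rfl | rfl | rfl | rfl | rfl | rfl | rfl | rfl | rfl | rfl | rfl | rfl)
      <;> [use 0, 0; use 1, 0; use -1, 0; use 2, 0; use -2, 0; use 3, 0; use -3, 0; use 4, 0;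
        use -4, 0; use 0, 1; use 0, -1; use 0, 2; use 0, -2; use 1, 1; use -1, 1; use 1, -1;
        use -1, -1; use 2, 1; use -2, 1; use 2, -1; use -2, -1; use 3, 1; use -3, 1; use 3, -1;
        use -3, -1]
    all_goals exact ⟨by norm_num, by push_cast; module⟩

theorem stmt17_general (R : Set V) (hR : IsGRS R) (hirr : IsIrreducibleGRS R)
    (hdim : Module.finrank ℝ V = 2) (x : V) (hx : IsPrimitive R x)
    (h4 : (4 : ℝ) • x ∈ R) :
    ∃ y : V, ⟪x, y⟫ = 0 ∧ ‖y‖ ^ 2 = 6 * ‖x‖ ^ 2 ∧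
      R = {0, x, -x, (2 : ℝ) • x, -((2 : ℝ) • x), (3 : ℝ) • x, -((3 : ℝ) • x),
           (4 : ℝ) • x, -((4 : ℝ) • x), y, -y, (2 : ℝ) • y, -((2 : ℝ) • y),
           y + x, y - x, -y + x, -y - x,
           y + (2 : ℝ) • x, y - (2 : ℝ) • x, -y + (2 : ℝ) • x, -y - (2 : ℝ) • x,
           y + (3 : ℝ) • x, y - (3 : ℝ) • x, -y + (3 : ℝ) • x, -y - (3 : ℝ) • x} := by
  obtain ⟨q, hq, hxq, hdecomp⟩ := exists_unit_orthogonal_decomp hdim hx.2.1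
  have hcoords (v : V) : v ∈ R ↔ (⟪x, v⟫ / ⟪x, x⟫) • x + ⟪q, v⟫ • q ∈ R := by
    rw [← hdecomp v]
  have hV : ℝ ∙ x ≠ ⊤ := fun h => by
    have := finrank_span_singleton (K := ℝ) hx.2.1
    rw [h, finrank_top, hdim] at this
    norm_num at this
  obtain ⟨v, hvR, hxv, hvx⟩ := hirr.exists_inner_ne_zero_not_mem_span hR.2.2.1 hx.1 hx.2.1 hV
  obtain ⟨d, hd, hd6, hchar⟩ := (hR.isPlanarGRS hx.2.1 hq hxq).exists_mem_iff_rootCoeffs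
    (by simpa using hx.1) (by simpa using h4)
    (fun n hn h => hx.eq_one_of_inv_smul_mem hn (by simpa using h)) ((hcoords v).1 hvR)
    (div_ne_zero hxv (real_inner_self_pos.2 hx.2.1).ne')
    fun h => hvx (by
      rw [hdecomp v, h, zero_smul, add_zero]
      exact Submodule.mem_span_singleton.2 ⟨_, rfl⟩)
  refine ⟨d • q, by rw [real_inner_smul_right, hxq, mul_zero], ?_, ?_⟩
  · rw [← real_inner_self_eq_norm_sq, ← real_inner_self_eq_norm_sq, real_inner_smul_left,
      real_inner_smul_right, hq, ← hd6]
    ring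
  · rw [← setOf_rootCoeffs_eq]
    ext w
    rw [hcoords, hchar]
    simp only [Set.mem_ofPred_eq, smul_smul]
    exact exists_congr fun p => and_congr_right fun _ =>
      (eq_smul_add_smul_iff hx.2.1 hq hxq hdecomp).symm

/-- An irreducible rank 2 GRS containing a primitive root `x` with
multiplier 4 is the GRS `{0, ±x, ±2x, ±3x, ±4x, ±y, ±y±x, ±y±2x, ±y±3x, ±2y}` with
`y ⊥ x` and `‖y‖² = 6‖x‖²`. -/
theorem stmt17 (R : Set V) (hR : IsGRS R) (hirr : IsIrreducibleGRS R)
    (hdim : Module.finrank ℝ V = 2) (x : V) (hx : IsPrimitive R x)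
    (h2 : (2 : ℝ) • x ∈ R) (h3 : (3 : ℝ) • x ∈ R) (h4 : (4 : ℝ) • x ∈ R) :
    ∃ y : V, ⟪x, y⟫ = 0 ∧ ‖y‖ ^ 2 = 6 * ‖x‖ ^ 2 ∧
      R = {0, x, -x, (2 : ℝ) • x, -((2 : ℝ) • x), (3 : ℝ) • x, -((3 : ℝ) • x),
           (4 : ℝ) • x, -((4 : ℝ) • x), y, -y, (2 : ℝ) • y, -((2 : ℝ) • y),
           y + x, y - x, -y + x, -y - x,
           y + (2 : ℝ) • x, y - (2 : ℝ) • x, -y + (2 : ℝ) • x, -y - (2 : ℝ) • x,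
           y + (3 : ℝ) • x, y - (3 : ℝ) • x, -y + (3 : ℝ) • x, -y - (3 : ℝ) • x} :=
  stmt17_general R hR hirr hdim x hx h4
end
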